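/- arXiv:math/0502101 — 3 statements merged into one kernel-verified Lean document; each statement's English description precedes it below -/
import Mathlib

section
/- Assume G is a δ-hyperbolic group with respect to a finite symmetrized generating set 𝒜, and A, B are ε-quasiconvex subgroups of G. Then there exists a constant C_0 = C_0(δ, ε, G, 𝒜) ≥ 0 such that for any a ∈ A and b ∈ B, if a is a shortest representative of the coset a(A ∩ B) (i.e. |a|_G ≤ |az|_G for all z ∈ A ∩ B), then the Gromov product satisfies (a⁻¹ | b)_{1_G} ≤ C_0. -/
open scoped Pointwise

/-- `S` is a finite symmetrized generating set of the group `G`. -/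
def IsSymmGenSet {G : Type*} [Group G] (S : Set G) : Prop :=
  S.Finite ∧ S⁻¹ = S ∧ Subgroup.closure S = ⊤

/-- The word length of `g` with respect to the generating set `S`: the length of a
shortest word over `S` representing `g`. -/
noncomputable def wordLength {G : Type*} [Group G] (S : Set G) (g : G) : ℕ :=
  sInf {n : ℕ | ∃ f : Fin n → G, (∀ i, f i ∈ S) ∧ (List.ofFn f).prod = g}

/-- The left-invariant word metric `d(x,y) = |x⁻¹y|_G` on `G`. -/
noncomputable def wordDist {G : Type*} [Group G] (S : Set G) (x y : G) : ℕ :=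
  wordLength S (x⁻¹ * y)

/-- The Gromov product `(x|y)_w = (d(x,w)+d(y,w)-d(x,y))/2`. -/
noncomputable def gromovProd {G : Type*} [Group G] (S : Set G) (x y w : G) : ℝ :=
  ((wordDist S w x : ℝ) + (wordDist S w y : ℝ) - (wordDist S x y : ℝ)) / 2

/-- A discrete geodesic from `u` to `v` in the Cayley graph `Γ(G,S)`: a sequence of
vertices `p 0 = u, ..., p (d(u,v)) = v` with `d(p i, p j) = j - i`. -/
def IsGeodesic {G : Type*} [Group G] (S : Set G) (u v : G) (p : ℕ → G) : Prop :=
  p 0 = u ∧ p (wordDist S u v) = v ∧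
    ∀ i j : ℕ, i ≤ j → j ≤ wordDist S u v → wordDist S (p i) (p j) = j - i

/-- A subset `Q ⊆ G` is `ε`-quasiconvex if every geodesic between two elements of `Q`
lies in the closed `ε`-neighborhood of `Q`. -/
def IsQuasiconvex {G : Type*} [Group G] (S : Set G) (ε : ℝ) (Q : Set G) : Prop :=
  ∀ u ∈ Q, ∀ v ∈ Q, ∀ p : ℕ → G, IsGeodesic S u v p →
    ∀ i ≤ wordDist S u v, ∃ q ∈ Q, (wordDist S (p i) q : ℝ) ≤ ε

/-- All geodesic triangles in `Γ(G,S)` are `δ`-thin: two points on the sides of a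
geodesic triangle, equidistant from a common vertex (within the Gromov product),
are at distance at most `δ` from each other. -/
def ThinTriangles {G : Type*} [Group G] (S : Set G) (δ : ℝ) : Prop :=
  ∀ a b c : G, ∀ p q : ℕ → G, IsGeodesic S a b p → IsGeodesic S a c q →
    ∀ i : ℕ, (i : ℝ) ≤ gromovProd S b c a → (wordDist S (p i) (q i) : ℝ) ≤ δ

/-- The profinite topology on `G`: cosets of finite index normal subgroups form a
basis of open sets (equivalently, a basis of neighborhoods of the identity). -/
def profiniteTopology (G : Type*) [Group G] : TopologicalSpace G :=
  TopologicalSpace.generateFrom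
    {U : Set G | ∃ (g : G) (N : Subgroup G), N.Normal ∧ N.FiniteIndex ∧ U = g • (N : Set G)}

/-- A subset of `G` is separable if it is closed in the profinite topology on `G`. -/
def SeparableSubset (G : Type*) [Group G] (P : Set G) : Prop :=
  @IsClosed G (profiniteTopology G) P

/-- A word hyperbolic group `G` (with finite symmetrized generating set `S`) is GFERF
if every quasiconvex subgroup of `G` is separable. -/
def GFERF {G : Type*} [Group G] (S : Set G) : Prop :=
  ∀ H : Subgroup G, (∃ ε : ℝ, 0 ≤ ε ∧ IsQuasiconvex S ε (H : Set G)) →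
    SeparableSubset G (H : Set G)

/-- A `(λ,c)`-quasigeodesic path of length `n` in the Cayley graph `Γ(G,S)`:
consecutive vertices are adjacent and every subpath `p|_{[i,j]}` satisfies
`λ(j-i) - c ≤ d(p i, p j)`. -/
def IsQuasigeodesicOn {G : Type*} [Group G] (S : Set G) (lam c : ℝ) (p : ℕ → G) (n : ℕ) : Prop :=
  (∀ i < n, wordDist S (p i) (p (i + 1)) = 1) ∧
    ∀ i j : ℕ, i ≤ j → j ≤ n → lam * ((j : ℝ) - (i : ℝ)) - c ≤ (wordDist S (p i) (p j) : ℝ)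

namespace SGPaux

variable {G : Type*} [Group G] (S : Set G)

lemma wordLength_le {g : G} {l : List G} (hl : ∀ x ∈ l, x ∈ S) (hp : l.prod = g) :
    wordLength S g ≤ l.length := by
  apply Nat.sInf_le
  exact ⟨l.get, fun i => hl _ (l.get_mem i), by rw [List.ofFn_get]; exact hp⟩

lemma exists_word (hsym : S⁻¹ = S) (hgen : Subgroup.closure S = ⊤) (g : G) :
    ∃ l : List G, (∀ x ∈ l, x ∈ S) ∧ l.prod = g ∧ l.length = wordLength S g := by
  have hne : {n : ℕ | ∃ f : Fin n → G, (∀ i, f i ∈ S) ∧ (List.ofFn f).prod = g}.Nonempty := by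
    have hg : g ∈ Subgroup.closure S := by rw [hgen]; trivial
    have hg' : g ∈ (Subgroup.closure S).toSubmonoid := hg
    rw [Subgroup.closure_toSubmonoid, hsym, Set.union_self] at hg'
    obtain ⟨l, hl, hp⟩ := Submonoid.exists_list_of_mem_closure hg'
    exact ⟨l.length, l.get, fun i => hl _ (l.get_mem i), by rw [List.ofFn_get]; exact hp⟩
  obtain ⟨f, hf, hp⟩ := Nat.sInf_mem hne
  exact ⟨List.ofFn f, by simpa using fun i => hf i, hp, by simp [wordLength]⟩

lemma wordLength_one : wordLength S (1 : G) = 0 :=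
  Nat.le_zero.mp (wordLength_le S (l := []) (by simp) (by simp))

lemma wordLength_inv_le (hsym : S⁻¹ = S) (hgen : Subgroup.closure S = ⊤) (g : G) :
    wordLength S g⁻¹ ≤ wordLength S g := by
  obtain ⟨l, hl, hp, hlen⟩ := exists_word S hsym hgen g
  have : wordLength S g⁻¹ ≤ ((l.map (fun x => x⁻¹)).reverse).length := by
    apply wordLength_le
    · intro x hx
      simp only [List.mem_reverse, List.mem_map] at hx
      obtain ⟨y, hy, rfl⟩ := hx
      rw [← hsym]; exact Set.inv_mem_inv.mpr (hl y hy)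
    · rw [← List.prod_inv_reverse, hp]
  simpa [hlen] using this

lemma wordLength_inv (hsym : S⁻¹ = S) (hgen : Subgroup.closure S = ⊤) (g : G) :
    wordLength S g⁻¹ = wordLength S g :=
  le_antisymm (wordLength_inv_le S hsym hgen g)
    (by simpa using wordLength_inv_le S hsym hgen g⁻¹)

lemma wordLength_mul_le (hsym : S⁻¹ = S) (hgen : Subgroup.closure S = ⊤) (g h : G) :
    wordLength S (g * h) ≤ wordLength S g + wordLength S h := by
  obtain ⟨l₁, hl₁, hp₁, hlen₁⟩ := exists_word S hsym hgen g
  obtain ⟨l₂, hl₂, hp₂, hlen₂⟩ := exists_word S hsym hgen h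
  have := wordLength_le S (l := l₁ ++ l₂)
    (by intro x hx; rcases List.mem_append.mp hx with h | h; exacts [hl₁ x h, hl₂ x h])
    (by rw [List.prod_append, hp₁, hp₂])
  simpa [hlen₁, hlen₂] using this

lemma wordDist_triangle (hsym : S⁻¹ = S) (hgen : Subgroup.closure S = ⊤) (x y z : G) :
    wordDist S x z ≤ wordDist S x y + wordDist S y z := by
  have : x⁻¹ * z = (x⁻¹ * y) * (y⁻¹ * z) := by group
  rw [wordDist, this]
  exact wordLength_mul_le S hsym hgen _ _

lemma wordDist_symm (hsym : S⁻¹ = S) (hgen : Subgroup.closure S = ⊤) (x y : G) :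
    wordDist S x y = wordDist S y x := by
  rw [wordDist, wordDist, ← wordLength_inv S hsym hgen]
  congr 1; group

lemma wordDist_left_inv (g x y : G) : wordDist S (g * x) (g * y) = wordDist S x y := by
  unfold wordDist; congr 1; group

lemma exists_geodesic (hsym : S⁻¹ = S) (hgen : Subgroup.closure S = ⊤) (u v : G) :
    ∃ p : ℕ → G, p 0 = u ∧ p (wordDist S u v) = v ∧
      ∀ i j : ℕ, i ≤ j → j ≤ wordDist S u v → wordDist S (p i) (p j) = j - i := by
  obtain ⟨l, hl, hp, hlen⟩ := exists_word S hsym hgen (u⁻¹ * v)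
  have hlen' : l.length = wordDist S u v := hlen
  refine ⟨fun k => u * (l.take k).prod, by simp, ?_, ?_⟩
  · show u * (l.take (wordDist S u v)).prod = v
    rw [← hlen', List.take_length, hp]; group
  · intro i j hij hj
    have hseg : wordDist S (u * (l.take i).prod) (u * (l.take j).prod)
        = wordLength S (((l.drop i).take (j - i)).prod) := by
      rw [wordDist_left_inv]
      unfold wordDist
      congr 1
      have : l.take j = l.take i ++ (l.drop i).take (j - i) := by
        rw [← List.take_add]
        congr 1; omega
      rw [this, List.prod_append]
      group
    have hub : wordLength S (((l.drop i).take (j - i)).prod) ≤ j - i := by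
      have h1 := wordLength_le S (l := (l.drop i).take (j - i))
        (fun x hx => hl x (List.mem_of_mem_drop (List.mem_of_mem_take hx))) rfl
      calc wordLength S (((l.drop i).take (j - i)).prod) ≤ _ := h1
        _ ≤ j - i := by rw [List.length_take]; omega
    -- lower bound via triangle inequality
    have hii : wordDist S u (u * (l.take i).prod) ≤ i := by
      have : wordDist S u (u * (l.take i).prod) = wordLength S (l.take i).prod := by
        unfold wordDist; congr 1; group
      rw [this]
      calc wordLength S (l.take i).prod ≤ (l.take i).length :=
            wordLength_le S (fun x hx => hl x (List.mem_of_mem_take hx)) rfl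
        _ ≤ i := by rw [List.length_take]; omega
    have hjj : wordDist S (u * (l.take j).prod) v ≤ l.length - j := by
      have : wordDist S (u * (l.take j).prod) v = wordLength S (l.drop j).prod := by
        unfold wordDist
        congr 1
        have hsplit : l.take j ++ l.drop j = l := List.take_append_drop j l
        have : (l.take j).prod * (l.drop j).prod = u⁻¹ * v := by
          rw [← List.prod_append, hsplit, hp]
        calc (u * (l.take j).prod)⁻¹ * v = (l.take j).prod⁻¹ * (u⁻¹ * v) := by group
          _ = (l.take j).prod⁻¹ * ((l.take j).prod * (l.drop j).prod) := by rw [this]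
          _ = (l.drop j).prod := by group
      rw [this]
      calc wordLength S (l.drop j).prod ≤ (l.drop j).length :=
            wordLength_le S (fun x hx => hl x (List.mem_of_mem_drop hx)) rfl
        _ = l.length - j := by rw [List.length_drop]
    have htri : wordDist S u v ≤ wordDist S u (u * (l.take i).prod)
        + wordDist S (u * (l.take i).prod) (u * (l.take j).prod)
        + wordDist S (u * (l.take j).prod) v := by
      calc wordDist S u v ≤ wordDist S u (u * (l.take j).prod)
            + wordDist S (u * (l.take j).prod) v := wordDist_triangle S hsym hgen _ _ _
        _ ≤ _ := by
            have := wordDist_triangle S hsym hgen u (u * (l.take i).prod) (u * (l.take j).prod)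
            omega
    rw [hseg]
    rw [hseg] at htri
    have hn : wordDist S u v = l.length := hlen'.symm
    omega

lemma finite_ball (hfin : S.Finite) (hsym : S⁻¹ = S) (hgen : Subgroup.closure S = ⊤) (n : ℕ) :
    {g : G | wordLength S g ≤ n}.Finite := by
  haveI : Finite ↥S := hfin
  apply Set.Finite.subset (Set.Finite.image (fun l : List ↥S => (l.map Subtype.val).prod)
    (List.finite_length_le ↥S n))
  intro g hg
  simp only [Set.mem_setOf_eq] at hg
  obtain ⟨l, hl, hp, hlen⟩ := exists_word S hsym hgen g
  refine ⟨l.pmap Subtype.mk hl, ?_, ?_⟩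
  · simp only [Set.mem_setOf_eq, List.length_pmap]
    omega
  · simp only [List.map_pmap]
    simpa using hp


end SGPaux

/-- **Lemma 1 (small Gromov products).** If `G` is `δ`-hyperbolic and `A, B` are
`ε`-quasiconvex subgroups, there is a constant `C₀ = C₀(δ,ε,G,S) ≥ 0` such that for any
`a ∈ A`, `b ∈ B`, the inequality `(a⁻¹|b)₁ ≤ C₀` holds whenever `a` is a shortest
representative of the coset `a(A ∩ B)`. -/
theorem small_gromov_products
    {G : Type*} [Group G] (S : Set G) (hS : IsSymmGenSet S)
    (δ : ℝ) (hδ : 0 ≤ δ) (hhyp : ThinTriangles S δ)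
    (ε : ℝ) (hε : 0 ≤ ε) (A B : Subgroup G)
    (hA : IsQuasiconvex S ε (A : Set G)) (hB : IsQuasiconvex S ε (B : Set G)) :
    ∃ C₀ : ℝ, 0 ≤ C₀ ∧ ∀ a ∈ A, ∀ b ∈ B,
      (∀ z ∈ A ⊓ B, wordLength S a ≤ wordLength S (a * z)) →
      gromovProd S a⁻¹ b 1 ≤ C₀ := by
  obtain ⟨hfin, hsym, hgen⟩ := hS
  classical
  set R : ℕ := ⌈2 * ε + δ⌉₊ with hR
  set T : Finset G := (SGPaux.finite_ball S hfin hsym hgen R).toFinset with hT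
  set M : ℕ := ⌈2 * ε⌉₊ + 1 with hM
  refine ⟨(T.card * M : ℝ), by positivity, ?_⟩
  intro a ha b hb hmin
  by_contra hgt
  push_neg at hgt
  obtain ⟨p, hp0, hpn, hpg⟩ := SGPaux.exists_geodesic S hsym hgen 1 a⁻¹
  obtain ⟨q, hq0, hqn, hqg⟩ := SGPaux.exists_geodesic S hsym hgen 1 b
  have hpgeo : IsGeodesic S 1 a⁻¹ p := ⟨hp0, hpn, hpg⟩
  have hqgeo : IsGeodesic S 1 b q := ⟨hq0, hqn, hqg⟩
  set n := wordDist S 1 a⁻¹ with hn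
  set m := wordDist S 1 b with hm
  have hGPa : gromovProd S a⁻¹ b 1 ≤ (n : ℝ) := by
    have tri : m ≤ n + wordDist S a⁻¹ b := by
      have := SGPaux.wordDist_triangle S hsym hgen 1 a⁻¹ b
      omega
    have tri' : (m : ℝ) ≤ (n : ℝ) + (wordDist S a⁻¹ b : ℝ) := by exact_mod_cast tri
    rw [gromovProd]
    linarith
  have hGPb : gromovProd S a⁻¹ b 1 ≤ (m : ℝ) := by
    have tri : n ≤ m + wordDist S a⁻¹ b := by
      have h1 := SGPaux.wordDist_triangle S hsym hgen 1 b a⁻¹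
      have h2 := SGPaux.wordDist_symm S hsym hgen b a⁻¹
      omega
    have tri' : (n : ℝ) ≤ (m : ℝ) + (wordDist S a⁻¹ b : ℝ) := by exact_mod_cast tri
    rw [gromovProd]
    linarith
  have hidx : ∀ k : ℕ, k ≤ T.card → ((k * M : ℕ) : ℝ) ≤ gromovProd S a⁻¹ b 1 := by
    intro k hk
    have h1 : ((k * M : ℕ) : ℝ) ≤ (T.card * M : ℝ) := by
      push_cast
      have hkk : (k : ℝ) ≤ T.card := by exact_mod_cast hk
      nlinarith [Nat.cast_nonneg (α := ℝ) M]
    linarith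
  have hidxa : ∀ k : ℕ, k ≤ T.card → k * M ≤ n := fun k hk => by
    have := (hidx k hk).trans hGPa; exact_mod_cast this
  have hidxb : ∀ k : ℕ, k ≤ T.card → k * M ≤ m := fun k hk => by
    have := (hidx k hk).trans hGPb; exact_mod_cast this
  have key : ∀ k : ℕ, ∃ αβ : G × G, k ≤ T.card →
      αβ.1 ∈ A ∧ αβ.2 ∈ B ∧ (wordDist S (p (k * M)) αβ.1 : ℝ) ≤ ε ∧
        (wordDist S (q (k * M)) αβ.2 : ℝ) ≤ ε := by
    intro k
    by_cases hk : k ≤ T.card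
    · obtain ⟨α, hαA, hα⟩ := hA 1 A.one_mem a⁻¹ (A.inv_mem ha) p hpgeo (k * M) (hidxa k hk)
      obtain ⟨β, hβB, hβ⟩ := hB 1 B.one_mem b hb q hqgeo (k * M) (hidxb k hk)
      exact ⟨(α, β), fun _ => ⟨hαA, hβB, hα, hβ⟩⟩
    · exact ⟨(1, 1), fun h => absurd h hk⟩
  choose αβ hkey using key
  set f : ℕ → G := fun k => (αβ k).1⁻¹ * (αβ k).2 with hf
  have hmaps : ∀ k ∈ Finset.range (T.card + 1), f k ∈ T := by
    intro k hk
    rw [Finset.mem_range] at hk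
    have hk' : k ≤ T.card := by omega
    obtain ⟨hαA, hβB, hα, hβ⟩ := hkey k hk'
    have hthin : (wordDist S (p (k * M)) (q (k * M)) : ℝ) ≤ δ :=
      hhyp 1 a⁻¹ b p q hpgeo hqgeo (k * M) (hidx k hk')
    have htri : (wordLength S (f k) : ℝ) ≤ 2 * ε + δ := by
      have e1 : wordLength S (f k) = wordDist S (αβ k).1 (αβ k).2 := rfl
      have t1 : wordDist S (αβ k).1 (αβ k).2 ≤
          wordDist S (αβ k).1 (p (k * M)) + wordDist S (p (k * M)) (q (k * M))
            + wordDist S (q (k * M)) (αβ k).2 := by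
        have h1 := SGPaux.wordDist_triangle S hsym hgen (αβ k).1 (p (k * M)) (αβ k).2
        have h2 := SGPaux.wordDist_triangle S hsym hgen (p (k * M)) (q (k * M)) (αβ k).2
        omega
      have hsymm : wordDist S (αβ k).1 (p (k * M)) = wordDist S (p (k * M)) (αβ k).1 :=
        SGPaux.wordDist_symm S hsym hgen _ _
      rw [e1]
      have t1' : (wordDist S (αβ k).1 (αβ k).2 : ℝ) ≤
          (wordDist S (αβ k).1 (p (k * M)) : ℝ) + (wordDist S (p (k * M)) (q (k * M)) : ℝ)
            + (wordDist S (q (k * M)) (αβ k).2 : ℝ) := by exact_mod_cast t1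
      rw [hsymm] at t1'
      linarith
    have hball : wordLength S (f k) ≤ R := by
      have h2 : (wordLength S (f k) : ℝ) ≤ (R : ℝ) := htri.trans (Nat.le_ceil _)
      exact_mod_cast h2
    rw [hT, Set.Finite.mem_toFinset]
    exact hball
  have hcard : T.card < (Finset.range (T.card + 1)).card := by simp
  obtain ⟨k₁, hk₁, k₂, hk₂, hne, hfeq⟩ :=
    Finset.exists_ne_map_eq_of_card_lt_of_maps_to hcard hmaps
  have main : ∀ j₁ j₂ : ℕ, j₁ < j₂ → j₂ ≤ T.card → f j₁ = f j₂ → False := by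
    intro k₁ k₂ hlt hk₂ hfeq
    have hk₁ : k₁ ≤ T.card := by omega
    obtain ⟨hA₁, hB₁, hα₁, hβ₁⟩ := hkey k₁ hk₁
    obtain ⟨hA₂, hB₂, hα₂, hβ₂⟩ := hkey k₂ hk₂
    set i := k₁ * M with hi
    set j := k₂ * M with hj
    set z := (αβ k₂).1 * (αβ k₁).1⁻¹ with hz
    have hzB : z = (αβ k₂).2 * (αβ k₁).2⁻¹ := by
      have h : (αβ k₁).1⁻¹ * (αβ k₁).2 = (αβ k₂).1⁻¹ * (αβ k₂).2 := hfeq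
      calc z = (αβ k₂).1 * ((αβ k₁).1⁻¹ * (αβ k₁).2) * (αβ k₁).2⁻¹ := by rw [hz]; group
        _ = (αβ k₂).1 * ((αβ k₂).1⁻¹ * (αβ k₂).2) * (αβ k₁).2⁻¹ := by rw [h]
        _ = (αβ k₂).2 * (αβ k₁).2⁻¹ := by group
    have hzmem : z ∈ A ⊓ B := by
      rw [Subgroup.mem_inf]
      refine ⟨A.mul_mem hA₂ (A.inv_mem hA₁), ?_⟩
      rw [hzB]; exact B.mul_mem hB₂ (B.inv_mem hB₁)
    have hji : j ≤ n := hidxa k₂ hk₂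
    have hin : i ≤ n := hidxa k₁ hk₁
    have d1 : wordDist S (p j) a⁻¹ = n - j := by
      have h := hpg j n hji le_rfl
      rw [hpn] at h
      exact h
    have d0 : wordDist S 1 (p i) = i := by
      have h := hpg 0 i (Nat.zero_le _) hin
      rw [hp0] at h
      simpa using h
    have e2 : wordLength S (a * z) = wordDist S z a⁻¹ := by
      rw [← SGPaux.wordLength_inv S hsym hgen (a * z), wordDist]
      congr 1
      group
    have t2 : wordDist S z a⁻¹ ≤ wordDist S z (p j) + wordDist S (p j) a⁻¹ :=
      SGPaux.wordDist_triangle S hsym hgen _ _ _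
    have t3 : wordDist S z (p j) ≤ wordLength S (αβ k₁).1 + wordDist S (αβ k₂).1 (p j) := by
      have e3 : wordDist S z (p j) = wordLength S ((αβ k₁).1 * ((αβ k₂).1⁻¹ * p j)) := by
        rw [wordDist]
        congr 1
        rw [hz]; group
      rw [e3]
      exact SGPaux.wordLength_mul_le S hsym hgen _ _
    have t4 : wordLength S (αβ k₁).1 ≤ wordDist S 1 (p i) + wordDist S (p i) (αβ k₁).1 := by
      have e4 : wordLength S (αβ k₁).1 = wordDist S 1 (αβ k₁).1 := by
        rw [wordDist]; congr 1; group
      rw [e4]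
      exact SGPaux.wordDist_triangle S hsym hgen _ _ _
    have hα₂' : (wordDist S (αβ k₂).1 (p j) : ℝ) ≤ ε := by
      rw [SGPaux.wordDist_symm S hsym hgen]
      exact hα₂
    have hlen_a : wordLength S a = n := by
      rw [hn, wordDist, ← SGPaux.wordLength_inv S hsym hgen a]
      congr 1
      group
    have hminz := hmin z hzmem
    have big : (n : ℝ) ≤ (i : ℝ) + 2 * ε + ((n : ℝ) - (j : ℝ)) := by
      have ht2 : (wordDist S z a⁻¹ : ℝ) ≤ (wordDist S z (p j) : ℝ)
          + (wordDist S (p j) a⁻¹ : ℝ) := by exact_mod_cast t2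
      have ht3 : (wordDist S z (p j) : ℝ) ≤ (wordLength S (αβ k₁).1 : ℝ)
          + (wordDist S (αβ k₂).1 (p j) : ℝ) := by exact_mod_cast t3
      have hd1 : (wordDist S (p j) a⁻¹ : ℝ) = (n : ℝ) - (j : ℝ) := by
        rw [d1, Nat.cast_sub hji]
      have ht4 : (wordLength S (αβ k₁).1 : ℝ) ≤ (wordDist S 1 (p i) : ℝ)
          + (wordDist S (p i) (αβ k₁).1 : ℝ) := by exact_mod_cast t4
      rw [d0] at ht4
      have c3 : (wordLength S a : ℝ) ≤ (wordLength S (a * z) : ℝ) := by exact_mod_cast hminz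
      rw [hlen_a] at c3
      have he2 : (wordLength S (a * z) : ℝ) = (wordDist S z a⁻¹ : ℝ) := by exact_mod_cast e2
      linarith
    have hMgap : i + M ≤ j := by
      have hk12 : k₁ + 1 ≤ k₂ := hlt
      calc i + M = (k₁ + 1) * M := by rw [hi]; ring
        _ ≤ k₂ * M := Nat.mul_le_mul_right M hk12
    have hMbig : 2 * ε < (M : ℝ) := by
      have h1 : (2 * ε) ≤ (⌈2 * ε⌉₊ : ℝ) := Nat.le_ceil _
      have h2 : ((⌈2 * ε⌉₊ : ℝ)) + 1 ≤ (M : ℝ) := by rw [hM]; push_cast; linarith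
      linarith
    have hcast : (i : ℝ) + (M : ℝ) ≤ (j : ℝ) := by exact_mod_cast hMgap
    linarith
  rw [Finset.mem_range] at hk₁ hk₂
  rcases Ne.lt_or_gt hne with h | h
  · exact main k₁ k₂ h (by omega) hfeq
  · exact main k₂ k₁ h (by omega) hfeq.symm
end

section
/- Assume G is a δ-hyperbolic group with respect to a finite symmetrized generating set 𝒜, and A, B are ε-quasiconvex subgroups of G. Then for any N ≥ 0 there exists N_1 = N_1(N, δ, ε, G, 𝒜) ≥ 0 with the following property: if subgroups A' ≤ A and B' ≤ B satisfy A ∩ B = A' ∩ B' and 𝒪_{N_1}(1_G) ∩ (A' ∪ B') ⊆ A ∩ B, then the subgroup H = ⟨A', B'⟩ generated by A' and B' satisfies 𝒪_N(1_G) ∩ (A H B) ⊆ AB. -/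
open scoped Pointwise

section Basics
variable {G : Type*} [Group G] {S : Set G} (hS : IsSymmGenSet S)

lemma wl_set_eq (g : G) (n : ℕ) :
    (∃ f : Fin n → G, (∀ i, f i ∈ S) ∧ (List.ofFn f).prod = g) ↔
      ∃ l : List G, l.length = n ∧ (∀ x ∈ l, x ∈ S) ∧ l.prod = g := by
  constructor
  · rintro ⟨f, hf, hprod⟩
    refine ⟨List.ofFn f, by simp, ?_, hprod⟩
    intro x hx
    obtain ⟨i, rfl⟩ := List.mem_ofFn.1 hx
    exact hf i
  · rintro ⟨l, hlen, hmem, hprod⟩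
    subst hlen
    refine ⟨l.get, fun i => hmem _ (l.get_mem _), ?_⟩
    rw [List.ofFn_get]; exact hprod

lemma wordLength_le {g : G} {l : List G} (hmem : ∀ x ∈ l, x ∈ S) (hprod : l.prod = g) :
    wordLength S g ≤ l.length :=
  Nat.sInf_le ((wl_set_eq g l.length).2 ⟨l, rfl, hmem, hprod⟩)

lemma wordLength_one : wordLength S (1 : G) = 0 :=
  Nat.le_zero.1 (wordLength_le (l := []) (by simp) (by simp))

lemma wordDist_leftInv (g x y : G) : wordDist S (g * x) (g * y) = wordDist S x y := by
  unfold wordDist; congr 1; group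

lemma wordDist_one_left (g : G) : wordDist S 1 g = wordLength S g := by
  simp [wordDist]

lemma wordDist_self (x : G) : wordDist S x x = 0 := by
  simp [wordDist, wordLength_one]

include hS

lemma exists_word (g : G) : ∃ l : List G, (∀ x ∈ l, x ∈ S) ∧ l.prod = g := by
  have hg : g ∈ Subgroup.closure S := hS.2.2 ▸ Subgroup.mem_top g
  have hSU : S ∪ S⁻¹ = S := by rw [hS.2.1, Set.union_self]
  have hg' : g ∈ Submonoid.closure S := by
    have := Subgroup.closure_toSubmonoid S
    have h2 : g ∈ (Subgroup.closure S).toSubmonoid := hg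
    rw [this, hSU] at h2
    exact h2
  obtain ⟨l, hl, hprod⟩ := Submonoid.exists_list_of_mem_closure hg'
  exact ⟨l, hl, hprod⟩

lemma wordLength_exists_word (g : G) :
    ∃ l : List G, l.length = wordLength S g ∧ (∀ x ∈ l, x ∈ S) ∧ l.prod = g := by
  have hne : {n : ℕ | ∃ f : Fin n → G, (∀ i, f i ∈ S) ∧ (List.ofFn f).prod = g}.Nonempty := by
    obtain ⟨l, hmem, hprod⟩ := exists_word hS g
    exact ⟨l.length, (wl_set_eq g l.length).2 ⟨l, rfl, hmem, hprod⟩⟩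
  have := Nat.sInf_mem hne
  exact (wl_set_eq g _).1 this

lemma wordLength_mul_le (g h : G) :
    wordLength S (g * h) ≤ wordLength S g + wordLength S h := by
  obtain ⟨l, hl, hlm, hlp⟩ := wordLength_exists_word hS g
  obtain ⟨m, hm, hmm, hmp⟩ := wordLength_exists_word hS h
  have := wordLength_le (S := S) (g := g * h) (l := l ++ m)
    (by intro x hx; rcases List.mem_append.1 hx with h' | h'; exacts [hlm x h', hmm x h'])
    (by rw [List.prod_append, hlp, hmp])
  simpa [hl, hm] using this

lemma wordLength_inv_le (g : G) : wordLength S g⁻¹ ≤ wordLength S g := by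
  obtain ⟨l, hl, hlm, hlp⟩ := wordLength_exists_word hS g
  have := wordLength_le (S := S) (g := g⁻¹) (l := (l.map fun x => x⁻¹).reverse)
    (by
      intro x hx
      simp only [List.mem_reverse, List.mem_map] at hx
      obtain ⟨y, hy, rfl⟩ := hx
      have : y⁻¹ ∈ S⁻¹ := Set.inv_mem_inv.2 (hlm y hy)
      rwa [hS.2.1] at this)
    (by rw [← List.prod_inv_reverse, hlp])
  simpa [hl] using this

lemma wordLength_inv (g : G) : wordLength S g⁻¹ = wordLength S g :=
  le_antisymm (wordLength_inv_le hS g) (by simpa using wordLength_inv_le hS g⁻¹)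

lemma eq_one_of_wordLength_eq_zero {g : G} (h : wordLength S g = 0) : g = 1 := by
  obtain ⟨l, hl, _, hlp⟩ := wordLength_exists_word hS g
  rw [h, List.length_eq_zero_iff] at hl
  subst hl; simpa using hlp.symm

lemma wordDist_symm (x y : G) : wordDist S x y = wordDist S y x := by
  unfold wordDist
  rw [← wordLength_inv hS (x⁻¹ * y)]; simp

lemma wordDist_triangle (x y z : G) : wordDist S x z ≤ wordDist S x y + wordDist S y z := by
  unfold wordDist
  have : x⁻¹ * z = (x⁻¹ * y) * (y⁻¹ * z) := by group
  rw [this]; exact wordLength_mul_le hS _ _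

lemma eq_of_wordDist_eq_zero {x y : G} (h : wordDist S x y = 0) : x = y := by
  have := eq_one_of_wordLength_eq_zero hS h
  rwa [inv_mul_eq_one] at this

end Basics




section Geo
variable {G : Type*} [Group G] {S : Set G} (hS : IsSymmGenSet S)

lemma wordDist_prefix {l : List G} (hmem : ∀ x ∈ l, x ∈ S) (u : G)
    {i j : ℕ} (hij : i ≤ j) :
    wordDist S (u * (l.take i).prod) (u * (l.take j).prod) ≤ j - i := by
  rw [wordDist_leftInv]
  unfold wordDist
  have hsub : (l.take i).prod⁻¹ * (l.take j).prod = ((l.drop i).take (j - i)).prod := by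
    have h1 : l.take j = l.take i ++ ((l.drop i).take (j - i)) := by
      conv_lhs => rw [← List.take_append_drop i (l.take j)]
      rw [List.take_take, min_eq_left hij, List.drop_take]
    rw [h1, List.prod_append]
    group
  rw [hsub]
  calc wordLength S ((l.drop i).take (j-i)).prod ≤ ((l.drop i).take (j-i)).length :=
        wordLength_le (fun x hx => hmem x (List.mem_of_mem_drop (List.mem_of_mem_take hx))) rfl
    _ ≤ j - i := by rw [List.length_take]; omega

include hS

lemma exists_geodesic (u v : G) : ∃ p : ℕ → G, IsGeodesic S u v p := by
  obtain ⟨l, hl, hmem, hprod⟩ := wordLength_exists_word hS (u⁻¹ * v)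
  set n := wordDist S u v with hn
  have hln : l.length = n := hl
  have hv : u * (l.take n).prod = v := by
    rw [← hln, List.take_length, hprod]; group
  refine ⟨fun i => u * (l.take i).prod, by simp, ?_, ?_⟩
  · show u * (l.take (wordDist S u v)).prod = v
    rw [← hn]; exact hv
  · intro i j hij hj
    show wordDist S (u * (l.take i).prod) (u * (l.take j).prod) = j - i
    have h1 : wordDist S (u * (l.take i).prod) (u * (l.take j).prod) ≤ j - i :=
      wordDist_prefix hmem u hij
    have h2 : wordDist S u (u * (l.take i).prod) ≤ i := by
      simpa using wordDist_prefix hmem u (Nat.zero_le i)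
    have h3 : wordDist S (u * (l.take j).prod) (u * (l.take n).prod) ≤ n - j := by
      exact wordDist_prefix hmem u hj
    rw [hv] at h3
    have htri : n ≤ i + (wordDist S (u * (l.take i).prod) (u * (l.take j).prod)) + (n - j) := by
      calc n = wordDist S u v := hn
        _ ≤ wordDist S u (u * (l.take i).prod) + wordDist S (u * (l.take i).prod) v :=
            wordDist_triangle hS _ _ _
        _ ≤ wordDist S u (u * (l.take i).prod) +
              (wordDist S (u * (l.take i).prod) (u * (l.take j).prod) +
               wordDist S (u * (l.take j).prod) v) := by
            exact Nat.add_le_add_left (wordDist_triangle hS _ _ _) _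
        _ ≤ i + (wordDist S (u * (l.take i).prod) (u * (l.take j).prod) + (n - j)) := by
            exact Nat.add_le_add (h2) (Nat.add_le_add_left h3 _)
        _ = i + (wordDist S (u * (l.take i).prod) (u * (l.take j).prod)) + (n - j) := by omega
    omega

omit hS in
lemma geo_dist_left {u v : G} {p : ℕ → G} (hp : IsGeodesic S u v p) {i : ℕ}
    (hi : i ≤ wordDist S u v) : wordDist S u (p i) = i := by
  have := hp.2.2 0 i (Nat.zero_le i) hi
  rw [hp.1] at this
  omega

omit hS in
lemma geo_dist_right {u v : G} {p : ℕ → G} (hp : IsGeodesic S u v p) {i : ℕ}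
    (hi : i ≤ wordDist S u v) : wordDist S (p i) v = wordDist S u v - i := by
  have := hp.2.2 i (wordDist S u v) hi le_rfl
  rw [hp.2.1] at this
  exact this

end Geo

section Gromov
variable {G : Type*} [Group G] {S : Set G} (hS : IsSymmGenSet S)
include hS

lemma gromovProd_symm (x y w : G) : gromovProd S x y w = gromovProd S y x w := by
  unfold gromovProd
  rw [wordDist_symm hS x y]
  ring

lemma gromovProd_nonneg (x y w : G) : 0 ≤ gromovProd S x y w := by
  unfold gromovProd
  have h := wordDist_triangle hS x w y
  rw [wordDist_symm hS x w] at h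
  have : (wordDist S x y : ℝ) ≤ (wordDist S w x : ℝ) + (wordDist S w y : ℝ) := by
    exact_mod_cast h
  linarith

lemma gromovProd_le_left (x y w : G) : gromovProd S x y w ≤ (wordDist S w x : ℝ) := by
  unfold gromovProd
  have h := wordDist_triangle hS w x y
  have : (wordDist S w y : ℝ) ≤ (wordDist S w x : ℝ) + (wordDist S x y : ℝ) := by exact_mod_cast h
  linarith

lemma gromovProd_le_right (x y w : G) : gromovProd S x y w ≤ (wordDist S w y : ℝ) := by
  rw [gromovProd_symm hS]; exact gromovProd_le_left hS y x w

omit hS in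
lemma gromovProd_leftInv (g x y w : G) :
    gromovProd S (g * x) (g * y) (g * w) = gromovProd S x y w := by
  unfold gromovProd
  rw [wordDist_leftInv, wordDist_leftInv, wordDist_leftInv]

lemma gromovProd_identity (x y w : G) :
    gromovProd S x y w + gromovProd S w y x = (wordDist S w x : ℝ) := by
  unfold gromovProd
  rw [wordDist_symm hS x w, wordDist_symm hS x y]
  ring

lemma four_point {δ : ℝ} (hδ : 0 ≤ δ) (hhyp : ThinTriangles S δ) (x y z w : G) :
    min (gromovProd S x y w) (gromovProd S y z w) - (δ + 1) ≤ gromovProd S x z w := by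
  set T := min (gromovProd S x y w) (gromovProd S y z w) with hT
  have hT0 : 0 ≤ T := le_min (gromovProd_nonneg hS x y w) (gromovProd_nonneg hS y z w)
  set i := ⌊T⌋₊ with hi
  have hiT : (i : ℝ) ≤ T := Nat.floor_le hT0
  have hTi : T ≤ (i : ℝ) + 1 := le_of_lt (Nat.lt_floor_add_one T)
  obtain ⟨p, hp⟩ := exists_geodesic hS w x
  obtain ⟨q, hq⟩ := exists_geodesic hS w z
  obtain ⟨r, hr⟩ := exists_geodesic hS w y
  have h1 : (wordDist S (p i) (r i) : ℝ) ≤ δ :=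
    hhyp w x y p r hp hr i (le_trans hiT (min_le_left _ _))
  have h2 : (wordDist S (r i) (q i) : ℝ) ≤ δ :=
    hhyp w y z r q hr hq i (le_trans hiT (min_le_right _ _))
  have hix : i ≤ wordDist S w x := by
    have : (i : ℝ) ≤ (wordDist S w x : ℝ) :=
      le_trans hiT (le_trans (min_le_left _ _) (gromovProd_le_left hS x y w))
    exact_mod_cast this
  have hiz : i ≤ wordDist S w z := by
    have : (i : ℝ) ≤ (wordDist S w z : ℝ) :=
      le_trans hiT (le_trans (min_le_right _ _) (gromovProd_le_right hS y z w))
    exact_mod_cast this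
  have hpx : wordDist S (p i) x = wordDist S w x - i := geo_dist_right hp hix
  have hqz : wordDist S (q i) z = wordDist S w z - i := geo_dist_right hq hiz
  have htri : wordDist S x z ≤
      wordDist S x (p i) + (wordDist S (p i) (r i) + (wordDist S (r i) (q i)
        + wordDist S (q i) z)) :=
    le_trans (wordDist_triangle hS x (p i) z)
      (Nat.add_le_add_left (le_trans (wordDist_triangle hS (p i) (r i) z)
        (Nat.add_le_add_left (wordDist_triangle hS (r i) (q i) z) _)) _)
  have hxz : (wordDist S x z : ℝ) ≤ ((wordDist S w x : ℝ) - i) + δ + δ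
      + ((wordDist S w z : ℝ) - i) := by
    have e1 : (wordDist S x (p i) : ℝ) = (wordDist S w x : ℝ) - i := by
      rw [wordDist_symm hS x (p i), hpx]
      push_cast [Nat.cast_sub hix]
      ring
    have e2 : (wordDist S (q i) z : ℝ) = (wordDist S w z : ℝ) - i := by
      rw [hqz]
      push_cast [Nat.cast_sub hiz]
      ring
    have := htri
    have hcast : (wordDist S x z : ℝ) ≤ (wordDist S x (p i) : ℝ)
        + ((wordDist S (p i) (r i) : ℝ) + ((wordDist S (r i) (q i) : ℝ)
        + (wordDist S (q i) z : ℝ))) := by exact_mod_cast this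
    rw [e1, e2] at hcast
    linarith
  unfold gromovProd
  linarith

end Gromov


section Balls
variable {G : Type*} [Group G] {S : Set G} (hS : IsSymmGenSet S)
include hS

lemma ball_nat_finite (n : ℕ) : {g : G | wordLength S g ≤ n}.Finite := by
  induction n with
  | zero =>
    apply Set.Finite.subset (Set.finite_singleton (1 : G))
    intro g hg
    simp only [Set.mem_setOf_eq, Nat.le_zero] at hg
    simp [eq_one_of_wordLength_eq_zero hS hg]
  | succ n ih =>
    apply Set.Finite.subset (Set.Finite.mul ih (hS.1.union (Set.finite_singleton 1)))
    intro g hg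
    simp only [Set.mem_setOf_eq] at hg
    obtain ⟨l, hl, hmem, hprod⟩ := wordLength_exists_word hS g
    rcases eq_or_ne l [] with rfl | hne
    · refine ⟨1, ?_, 1, Set.mem_union_right _ rfl, by simpa using hprod⟩
      simp only [Set.mem_setOf_eq, wordLength_one]
      omega
    · have hsplit := List.dropLast_append_getLast hne
      refine ⟨l.dropLast.prod, ?_, l.getLast hne, Set.mem_union_left _
        (hmem _ (List.getLast_mem hne)), ?_⟩
      · have h1 : wordLength S l.dropLast.prod ≤ l.dropLast.length :=
          wordLength_le (fun x hx => hmem x (List.dropLast_subset l hx)) rfl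
        have h2 : l.dropLast.length = l.length - 1 := List.length_dropLast
        simp only [Set.mem_setOf_eq]
        omega
      · rw [← hprod]
        conv_rhs => rw [← hsplit]
        rw [List.prod_append, List.prod_singleton]

lemma ball_finite (R : ℝ) : {g : G | (wordLength S g : ℝ) ≤ R}.Finite := by
  apply Set.Finite.subset (ball_nat_finite hS ⌊R⌋₊)
  intro g hg
  simp only [Set.mem_setOf_eq] at hg ⊢
  exact Nat.le_floor hg

end Balls

section NearQC
variable {G : Type*} [Group G] {S : Set G} (hS : IsSymmGenSet S)
include hS

lemma near_qc {δ ε r : ℝ} (hδ : 0 ≤ δ) (hε : 0 ≤ ε) (hr : 0 ≤ r)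
    (hhyp : ThinTriangles S δ) {Q : Set G} (hQ : IsQuasiconvex S ε Q)
    {u v α : G} (hu : u ∈ Q) (hα : α ∈ Q) (hval : (wordDist S v α : ℝ) ≤ r)
    {p : ℕ → G} (hp : IsGeodesic S u v p) {s : ℕ} (hs : s ≤ wordDist S u v) :
    ∃ q ∈ Q, (wordDist S (p s) q : ℝ) ≤ δ + ε + 2 * r := by
  by_cases hcase : (s : ℝ) ≤ gromovProd S v α u
  · obtain ⟨q', hq'⟩ := exists_geodesic hS u α
    have hthin : (wordDist S (p s) (q' s) : ℝ) ≤ δ := hhyp u v α p q' hp hq' s hcase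
    have hsα : s ≤ wordDist S u α := by
      have : (s : ℝ) ≤ (wordDist S u α : ℝ) :=
        le_trans hcase (gromovProd_le_right hS v α u)
      exact_mod_cast this
    obtain ⟨q, hqQ, hqd⟩ := hQ u hu α hα q' hq' s hsα
    refine ⟨q, hqQ, ?_⟩
    have htri : wordDist S (p s) q ≤ wordDist S (p s) (q' s) + wordDist S (q' s) q :=
      wordDist_triangle hS _ _ _
    have := (Nat.cast_le (α := ℝ)).2 htri
    push_cast at this
    linarith
  · push_neg at hcase
    refine ⟨α, hα, ?_⟩
    have hlow : (wordDist S u v : ℝ) - r ≤ gromovProd S v α u := by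
      unfold gromovProd
      have h1 : wordDist S u v ≤ wordDist S u α + wordDist S α v := wordDist_triangle hS _ _ _
      have h1' : (wordDist S u v : ℝ) ≤ (wordDist S u α : ℝ) + (wordDist S v α : ℝ) := by
        rw [wordDist_symm hS α v] at h1
        exact_mod_cast h1
      linarith
    have hpv : wordDist S (p s) v = wordDist S u v - s := geo_dist_right hp hs
    have hpv' : (wordDist S (p s) v : ℝ) = (wordDist S u v : ℝ) - s := by
      rw [hpv]; push_cast [Nat.cast_sub hs]; ring
    have htri : wordDist S (p s) α ≤ wordDist S (p s) v + wordDist S v α :=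
      wordDist_triangle hS _ _ _
    have htri' : (wordDist S (p s) α : ℝ) ≤ (wordDist S (p s) v : ℝ) + (wordDist S v α : ℝ) := by
      exact_mod_cast htri
    have : (wordDist S u v : ℝ) - (s : ℝ) < r := by linarith
    linarith

end NearQC

section NearInter
variable {G : Type*} [Group G] {S : Set G} (hS : IsSymmGenSet S)
include hS

lemma near_inter {δ ε : ℝ} (hδ : 0 ≤ δ) (hε : 0 ≤ ε) (hhyp : ThinTriangles S δ)
    {A B : Subgroup G} (hA : IsQuasiconvex S ε (A : Set G))
    (hB : IsQuasiconvex S ε (B : Set G)) (r : ℝ) (hr : 0 ≤ r) :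
    ∃ η : ℝ, 0 ≤ η ∧ ∀ z : G,
      (∃ α ∈ A, (wordDist S z α : ℝ) ≤ r) → (∃ β ∈ B, (wordDist S z β : ℝ) ≤ r) →
      ∃ γ ∈ (A ⊓ B : Subgroup G), (wordDist S z γ : ℝ) ≤ η := by
  classical
  set ρ : ℝ := δ + ε + 2 * r with hρdef
  have hfin : {g : G | (wordLength S g : ℝ) ≤ ρ}.Finite := ball_finite hS ρ
  haveI hft : Fintype ↥{g : G | (wordLength S g : ℝ) ≤ ρ} := hfin.fintype
  set K : ℕ := Fintype.card ↥{g : G | (wordLength S g : ℝ) ≤ ρ} *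
    Fintype.card ↥{g : G | (wordLength S g : ℝ) ≤ ρ} with hK
  refine ⟨(K : ℝ), by positivity, ?_⟩
  suffices H : ∀ n : ℕ, ∀ z : G, wordLength S z ≤ n →
      (∃ α ∈ A, (wordDist S z α : ℝ) ≤ r) → (∃ β ∈ B, (wordDist S z β : ℝ) ≤ r) →
      ∃ γ ∈ (A ⊓ B : Subgroup G), (wordDist S z γ : ℝ) ≤ (K : ℝ) by
    exact fun z => H (wordLength S z) z le_rfl
  intro n
  induction n using Nat.strong_induction_on with
  | _ n IH =>
  intro z hzn hza hzb
  by_cases hsmall : wordLength S z ≤ K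
  · refine ⟨1, Subgroup.one_mem _, ?_⟩
    have : wordDist S z 1 = wordLength S z := by
      rw [wordDist_symm hS, wordDist_one_left]
    rw [this]
    exact_mod_cast hsmall
  · push_neg at hsmall
    obtain ⟨α, hαA, hαd⟩ := hza
    obtain ⟨β, hβB, hβd⟩ := hzb
    obtain ⟨p, hp⟩ := exists_geodesic hS 1 z
    have hd1z : wordDist S (1 : G) z = wordLength S z := wordDist_one_left z
    set m : ℕ := wordLength S z with hm
    have hza' : (wordDist S z α : ℝ) ≤ r := hαd
    -- choose close points
    have hAs : ∀ s : Fin (m + 1), ∃ q ∈ (A : Set G), (wordDist S (p s) q : ℝ) ≤ ρ := by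
      intro s
      exact near_qc hS hδ hε hr hhyp hA (Subgroup.one_mem A) hαA hαd hp
        (by rw [hd1z]; omega)
    have hBs : ∀ s : Fin (m + 1), ∃ q ∈ (B : Set G), (wordDist S (p s) q : ℝ) ≤ ρ := by
      intro s
      exact near_qc hS hδ hε hr hhyp hB (Subgroup.one_mem B) hβB hβd hp
        (by rw [hd1z]; omega)
    choose fα hfαA hfαd using hAs
    choose fβ hfβB hfβd using hBs
    set F : Fin (m + 1) → ↥{g : G | (wordLength S g : ℝ) ≤ ρ} ×
        ↥{g : G | (wordLength S g : ℝ) ≤ ρ} :=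
      fun s => (⟨(p s)⁻¹ * fα s, hfαd s⟩, ⟨(p s)⁻¹ * fβ s, hfβd s⟩) with hF
    have hcard : Fintype.card (↥{g : G | (wordLength S g : ℝ) ≤ ρ} ×
        ↥{g : G | (wordLength S g : ℝ) ≤ ρ}) < Fintype.card (Fin (m + 1)) := by
      rw [Fintype.card_prod, Fintype.card_fin]
      omega
    obtain ⟨s, s', hne, hFeq⟩ := Fintype.exists_ne_map_eq_of_card_lt F hcard
    -- wlog s < s'
    wlog hlt : (s : ℕ) < (s' : ℕ) generalizing s s'
    · exact this s' s hne.symm hFeq.symm (by omega)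
    have hα_eq : (p s)⁻¹ * fα s = (p s')⁻¹ * fα s' := by
      have := congrArg Prod.fst hFeq
      exact Subtype.ext_iff.1 this
    have hβ_eq : (p s)⁻¹ * fβ s = (p s')⁻¹ * fβ s' := by
      have := congrArg Prod.snd hFeq
      exact Subtype.ext_iff.1 this
    set c : G := p s * (p s')⁻¹ with hc
    have hcA : c ∈ A := by
      have : c = fα s * (fα s')⁻¹ := by
        have h1 : fα s = p s * ((p s')⁻¹ * fα s') := by
          rw [← hα_eq]; group
        rw [h1, hc]; group
      rw [this]
      exact A.mul_mem (hfαA s) (A.inv_mem (hfαA s'))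
    have hcB : c ∈ B := by
      have : c = fβ s * (fβ s')⁻¹ := by
        have h1 : fβ s = p s * ((p s')⁻¹ * fβ s') := by
          rw [← hβ_eq]; group
        rw [h1, hc]; group
      rw [this]
      exact B.mul_mem (hfβB s) (B.inv_mem (hfβB s'))
    set z' : G := c * z with hz'
    have hs'le : (s' : ℕ) ≤ m := by omega
    have hz'len : wordLength S z' < m := by
      have h1 : wordLength S (p s) = s := by
        have := geo_dist_left hp (i := s) (by rw [hd1z]; omega)
        rwa [wordDist_one_left] at this
      have h2 : wordDist S (p s') z = m - s' := by
        have := geo_dist_right hp (i := s') (by rw [hd1z]; omega)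
        rwa [hd1z] at this
      have h3 : wordLength S z' ≤ wordLength S (p s) + wordLength S ((p s')⁻¹ * z) := by
        have : z' = p s * ((p s')⁻¹ * z) := by rw [hz', hc]; group
        rw [this]
        exact wordLength_mul_le hS _ _
      have h4 : wordLength S ((p s')⁻¹ * z) = m - s' := h2
      omega
    have hIH := IH (wordLength S z') (by omega) z' le_rfl
      ⟨c * α, A.mul_mem hcA hαA, by rwa [hz', wordDist_leftInv]⟩
      ⟨c * β, B.mul_mem hcB hβB, by rwa [hz', wordDist_leftInv]⟩
    obtain ⟨γ', hγ', hγ'd⟩ := hIH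
    refine ⟨c⁻¹ * γ', ?_, ?_⟩
    · exact Subgroup.mul_mem _ (Subgroup.mem_inf.2 ⟨A.inv_mem hcA, B.inv_mem hcB⟩) hγ'
    · have : wordDist S z (c⁻¹ * γ') = wordDist S z' γ' := by
        rw [hz', ← wordDist_leftInv (g := c) z (c⁻¹ * γ')]
        congr 1
        group
      rw [this]
      exact hγ'd
end NearInter

section Corner
variable {G : Type*} [Group G] {S : Set G} (hS : IsSymmGenSet S)
include hS

lemma corner_move {δ ε : ℝ} (hδ : 0 ≤ δ) (hε : 0 ≤ ε) (hhyp : ThinTriangles S δ)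
    {A B : Subgroup G} (hA : IsQuasiconvex S ε (A : Set G))
    (hB : IsQuasiconvex S ε (B : Set G)) :
    ∃ C₀ : ℝ, 0 ≤ C₀ ∧ ∀ u v : G, u ∈ A → v ∈ B → C₀ ≤ gromovProd S u v 1 →
      ∃ γ ∈ (A ⊓ B : Subgroup G),
        (wordDist S u γ : ℝ) + (wordDist S γ v : ℝ) + 2
          ≤ (wordLength S u : ℝ) + (wordLength S v : ℝ) := by
  obtain ⟨η, hη0, hη⟩ := near_inter hS hδ hε hhyp hA hB (δ + ε) (by linarith)
  refine ⟨η + δ / 2 + 2, by linarith, ?_⟩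
  intro u v huA hvB hprod
  set t : ℕ := ⌈η + δ / 2⌉₊ + 1 with ht
  have ht1 : η + δ / 2 + 1 ≤ (t : ℝ) := by
    have := Nat.le_ceil (η + δ / 2)
    push_cast [ht]
    linarith
  have ht2 : (t : ℝ) ≤ η + δ / 2 + 2 := by
    have := Nat.ceil_lt_add_one (show (0:ℝ) ≤ η + δ / 2 by linarith)
    push_cast [ht]
    linarith
  have htprod : (t : ℝ) ≤ gromovProd S u v 1 := le_trans ht2 hprod
  obtain ⟨p, hp⟩ := exists_geodesic hS 1 u
  obtain ⟨q, hq⟩ := exists_geodesic hS 1 v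
  have htu : t ≤ wordDist S 1 u := by
    have : (t : ℝ) ≤ (wordDist S 1 u : ℝ) := le_trans htprod (gromovProd_le_left hS u v 1)
    exact_mod_cast this
  have htv : t ≤ wordDist S 1 v := by
    have : (t : ℝ) ≤ (wordDist S 1 v : ℝ) := le_trans htprod (gromovProd_le_right hS u v 1)
    exact_mod_cast this
  have hthin : (wordDist S (p t) (q t) : ℝ) ≤ δ := hhyp 1 u v p q hp hq t htprod
  obtain ⟨α, hαA, hαd⟩ := hA 1 (Subgroup.one_mem A) u huA p hp t htu
  obtain ⟨β, hβB, hβd⟩ := hB 1 (Subgroup.one_mem B) v hvB q hq t htv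
  have hptβ : (wordDist S (p t) β : ℝ) ≤ δ + ε := by
    have htri : wordDist S (p t) β ≤ wordDist S (p t) (q t) + wordDist S (q t) β :=
      wordDist_triangle hS _ _ _
    have : (wordDist S (p t) β : ℝ) ≤ (wordDist S (p t) (q t) : ℝ)
        + (wordDist S (q t) β : ℝ) := by exact_mod_cast htri
    linarith
  obtain ⟨γ, hγAB, hγd⟩ := hη (p t) ⟨α, hαA, by linarith⟩ ⟨β, hβB, hptβ⟩
  refine ⟨γ, hγAB, ?_⟩
  have hpu : (wordDist S (p t) u : ℝ) = (wordDist S 1 u : ℝ) - t := by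
    rw [geo_dist_right hp htu]
    push_cast [Nat.cast_sub htu]
    ring
  have hqv : (wordDist S (q t) v : ℝ) = (wordDist S 1 v : ℝ) - t := by
    rw [geo_dist_right hq htv]
    push_cast [Nat.cast_sub htv]
    ring
  have h1 : (wordDist S u γ : ℝ) ≤ (wordDist S 1 u : ℝ) - t + η := by
    have htri : wordDist S u γ ≤ wordDist S u (p t) + wordDist S (p t) γ :=
      wordDist_triangle hS _ _ _
    have hc : (wordDist S u γ : ℝ) ≤ (wordDist S u (p t) : ℝ) + (wordDist S (p t) γ : ℝ) := by
      exact_mod_cast htri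
    rw [wordDist_symm hS u (p t)] at hc
    have hzd : (wordDist S (p t) γ : ℝ) ≤ η := hγd
    linarith
  have h2 : (wordDist S γ v : ℝ) ≤ η + δ + ((wordDist S 1 v : ℝ) - t) := by
    have htri : wordDist S γ v ≤ wordDist S γ (p t) + (wordDist S (p t) (q t)
        + wordDist S (q t) v) :=
      le_trans (wordDist_triangle hS γ (p t) v)
        (Nat.add_le_add_left (wordDist_triangle hS _ _ _) _)
    have hc : (wordDist S γ v : ℝ) ≤ (wordDist S γ (p t) : ℝ)
        + ((wordDist S (p t) (q t) : ℝ) + (wordDist S (q t) v : ℝ)) := by exact_mod_cast htri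
    rw [wordDist_symm hS γ (p t)] at hc
    have hzd : (wordDist S (p t) γ : ℝ) ≤ η := hγd
    linarith
  have hu1 : (wordDist S 1 u : ℝ) = (wordLength S u : ℝ) := by rw [wordDist_one_left]
  have hv1 : (wordDist S 1 v : ℝ) = (wordLength S v : ℝ) := by rw [wordDist_one_left]
  linarith

end Corner

section Broken
variable {G : Type*} [Group G] {S : Set G} (hS : IsSymmGenSet S)
include hS

lemma broken_line (δ₀ C : ℝ) (hδ₀ : 0 ≤ δ₀) (hC : 0 ≤ C)
    (h4 : ∀ x y z w : G, min (gromovProd S x y w) (gromovProd S y z w) - δ₀ ≤ gromovProd S x z w)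
    (L : ℝ) (hL : 2 * C + 2 * δ₀ + 1 ≤ L) (m : ℕ) (w : ℕ → G)
    (corner : ∀ j, 1 ≤ j → j + 1 ≤ m → gromovProd S (w (j - 1)) (w (j + 1)) (w j) ≤ C)
    (side : ∀ j, 2 ≤ j → j + 1 ≤ m → L ≤ (wordDist S (w (j - 1)) (w j) : ℝ)) :
    ∀ j, 1 ≤ j → j + 1 ≤ m →
      gromovProd S (w 0) (w (j + 1)) (w j) ≤ C + δ₀ ∧
      (∑ t ∈ Finset.range (j + 1), (wordDist S (w t) (w (t + 1)) : ℝ))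
          - 2 * (j : ℝ) * (C + δ₀) ≤ (wordDist S (w 0) (w (j + 1)) : ℝ) := by
  have hdist_eq : ∀ a b c : G, (wordDist S a c : ℝ) =
      (wordDist S a b : ℝ) + (wordDist S b c : ℝ) - 2 * gromovProd S a c b := by
    intro a b c
    unfold gromovProd
    rw [wordDist_symm hS b a]
    ring
  intro j hj
  induction j, hj using Nat.le_induction with
  | base =>
    intro hm
    have hcor := corner 1 le_rfl hm
    simp only [Nat.sub_self] at hcor
    constructor
    · linarith
    · have := hdist_eq (w 0) (w 1) (w 2)
      rw [Finset.sum_range_succ, Finset.sum_range_one]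
      push_cast
      linarith
  | succ j hj IH =>
    intro hm
    obtain ⟨IH1, IH2⟩ := IH (by omega)
    have hcor := corner (j + 1) (by omega) (by omega)
    simp only [Nat.add_sub_cancel] at hcor
    have hside := side (j + 1) (by omega) (by omega)
    simp only [Nat.add_sub_cancel] at hside
    have hid := gromovProd_identity hS (w j) (w 0) (w (j + 1))
    have hsymm : gromovProd S (w (j + 1)) (w 0) (w j) = gromovProd S (w 0) (w (j + 1)) (w j) :=
      gromovProd_symm hS _ _ _
    have hdj : (wordDist S (w (j + 1)) (w j) : ℝ) = (wordDist S (w j) (w (j + 1)) : ℝ) := by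
      rw [wordDist_symm hS]
    have hfirst : L - (C + δ₀) ≤ gromovProd S (w j) (w 0) (w (j + 1)) := by
      rw [hsymm] at hid
      linarith
    have h4' := h4 (w j) (w 0) (w (j + 2)) (w (j + 1))
    have hsecond : gromovProd S (w 0) (w (j + 2)) (w (j + 1)) ≤ C + δ₀ := by
      rcases min_cases (gromovProd S (w j) (w 0) (w (j + 1)))
          (gromovProd S (w 0) (w (j + 2)) (w (j + 1))) with ⟨heq, hle⟩ | ⟨heq, hle⟩
      · rw [heq] at h4'
        have : gromovProd S (w j) (w (j + 2)) (w (j + 1)) ≤ C := by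
          have := corner (j + 1) (by omega) (by omega)
          simpa using this
        linarith
      · rw [heq] at h4'
        have : gromovProd S (w j) (w (j + 2)) (w (j + 1)) ≤ C := by
          have := corner (j + 1) (by omega) (by omega)
          simpa using this
        linarith
    refine ⟨hsecond, ?_⟩
    have hd2 := hdist_eq (w 0) (w (j + 1)) (w (j + 2))
    rw [Finset.sum_range_succ]
    push_cast
    push_cast at IH2
    linarith

end Broken

section ListHelpers
variable {G : Type*} [Group G]

lemma list_split1 (l : List G) (i : ℕ) (h : i < l.length) :
    l = l.take i ++ l.getD i 1 :: l.drop (i + 1) := by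
  conv_lhs => rw [← List.take_append_drop i l]
  rw [List.drop_eq_getElem_cons h, List.getD_eq_getElem _ _ h]

lemma list_take_succ_prod (l : List G) (i : ℕ) (h : i < l.length) :
    (l.take (i + 1)).prod = (l.take i).prod * l.getD i 1 := by
  rw [List.take_succ, List.prod_append, List.getElem?_eq_getElem h, List.getD_eq_getElem _ _ h]
  simp

lemma mem_sup_list {A' B' : Subgroup G} {h : G} (hh : h ∈ A' ⊔ B') :
    ∃ l : List G, (∀ x ∈ l, x ∈ (A' : Set G) ∪ (B' : Set G)) ∧ l.prod = h := by
  rw [Subgroup.sup_eq_closure] at hh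
  induction hh using Subgroup.closure_induction with
  | mem x hx => exact ⟨[x], by simpa using hx, by simp⟩
  | one => exact ⟨[], by simp, by simp⟩
  | mul x y hx hy ihx ihy =>
    obtain ⟨lx, hlx, hlxp⟩ := ihx
    obtain ⟨ly, hly, hlyp⟩ := ihy
    refine ⟨lx ++ ly, ?_, by rw [List.prod_append, hlxp, hlyp]⟩
    intro t ht
    rcases List.mem_append.1 ht with h' | h'
    exacts [hlx t h', hly t h']
  | inv x hx ihx =>
    obtain ⟨lx, hlx, hlxp⟩ := ihx
    refine ⟨(lx.map fun t => t⁻¹).reverse, ?_, by rw [← List.prod_inv_reverse, hlxp]⟩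
    intro t ht
    simp only [List.mem_reverse, List.mem_map] at ht
    obtain ⟨y, hy, rfl⟩ := ht
    rcases hlx y hy with h' | h'
    · exact Set.mem_union_left _ (A'.inv_mem h')
    · exact Set.mem_union_right _ (B'.inv_mem h')

end ListHelpers

section Main
variable {G : Type*} [Group G] {S : Set G} (hS : IsSymmGenSet S)
include hS

lemma gromov_base (x y z : G) :
    gromovProd S y z x = gromovProd S (x⁻¹ * y) (x⁻¹ * z) 1 := by
  have := gromovProd_leftInv (S := S) (g := x⁻¹) y z x
  rw [inv_mul_cancel] at this
  exact this.symm

theorem main_theorem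
    (δ : ℝ) (hδ : 0 ≤ δ) (hhyp : ThinTriangles S δ)
    (ε : ℝ) (hε : 0 ≤ ε) (A B : Subgroup G)
    (hA : IsQuasiconvex S ε (A : Set G)) (hB : IsQuasiconvex S ε (B : Set G)) :
    ∀ N : ℝ, 0 ≤ N → ∃ N₁ : ℝ, 0 ≤ N₁ ∧
      ∀ A' B' : Subgroup G, A' ≤ A → B' ≤ B → A ⊓ B = A' ⊓ B' →
        ({g : G | (wordLength S g : ℝ) ≤ N₁} ∩ ((A' : Set G) ∪ (B' : Set G))
            ⊆ ((A ⊓ B : Subgroup G) : Set G)) →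
        ({g : G | (wordLength S g : ℝ) ≤ N} ∩
            ((A : Set G) * ((A' ⊔ B' : Subgroup G) : Set G) * (B : Set G))
          ⊆ (A : Set G) * (B : Set G)) := by
  intro N hN
  obtain ⟨Cab, hCab0, hCab⟩ := corner_move hS hδ hε hhyp hA hB
  obtain ⟨Cba, hCba0, hCba⟩ := corner_move hS hδ hε hhyp hB hA
  set C : ℝ := max Cab Cba with hCdef
  have hC0 : 0 ≤ C := le_trans hCab0 (le_max_left _ _)
  set δ₀ : ℝ := δ + 1 with hδ₀def
  have hδ₀0 : 0 ≤ δ₀ := by linarith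
  set C' : ℝ := C + δ₀ with hC'def
  set L : ℝ := 3 * C' + N / 2 + 1 with hLdef
  have hL0 : 0 ≤ L := by simp only [hLdef, hC'def]; linarith
  refine ⟨L, hL0, ?_⟩
  intro A' B' hA'A hB'B hinter hball g hg
  have hgN : (wordLength S g : ℝ) ≤ N := hg.1
  obtain ⟨xg, hxg, b0, hb0, hxb⟩ := hg.2
  obtain ⟨a0, ha0, h0, hh0, hah⟩ := hxg
  obtain ⟨l0, hl0mem, hl0prod⟩ := mem_sup_list hh0
  classical
  set Rep : ℕ → Prop := fun k => ∃ a b : G, ∃ l : List G, a ∈ A ∧ b ∈ B ∧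
    (∀ t ∈ l, t ∈ (A' : Set G) ∪ (B' : Set G)) ∧ l.length = k ∧ a * l.prod * b = g
    with hRepDef
  have hRepNE : Rep l0.length :=
    ⟨a0, b0, l0, ha0, hb0, hl0mem, rfl, by
      rw [hl0prod, (show a0 * h0 = xg from hah), (show xg * b0 = g from hxb)]⟩
  set k₀ : ℕ := sInf {k | Rep k} with hk₀def
  have hRepSetNE : {k | Rep k}.Nonempty := ⟨l0.length, hRepNE⟩
  have hk₀Rep : Rep k₀ := Nat.sInf_mem hRepSetNE
  have hk₀min : ∀ k, Rep k → k₀ ≤ k := fun k hk => Nat.sInf_le hk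
  rcases Nat.eq_zero_or_pos k₀ with hk₀0 | hk₀pos
  · -- trivial case : g = a * b
    obtain ⟨a, b, l, haA, hbB, _, hlen, hprod⟩ := hk₀Rep
    rw [hk₀0, List.length_eq_zero_iff] at hlen
    subst hlen
    exact ⟨a, haA, b, hbB, by simpa using hprod⟩
  · exfalso
    set SRep : ℕ → Prop := fun σ => ∃ a b : G, ∃ l : List G, a ∈ A ∧ b ∈ B ∧
      (∀ t ∈ l, t ∈ (A' : Set G) ∪ (B' : Set G)) ∧ l.length = k₀ ∧ a * l.prod * b = g ∧
      σ = wordLength S a + (l.map (wordLength S)).sum + wordLength S b with hSRepDef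
    have hSRepNE : {σ | SRep σ}.Nonempty := by
      obtain ⟨a, b, l, haA, hbB, hmem, hlen, hprod⟩ := hk₀Rep
      exact ⟨_, a, b, l, haA, hbB, hmem, hlen, hprod, rfl⟩
    set σ₀ : ℕ := sInf {σ | SRep σ} with hσ₀def
    have hσ₀SRep : SRep σ₀ := Nat.sInf_mem hSRepNE
    have hσ₀min : ∀ σ, SRep σ → σ₀ ≤ σ := fun σ hσ => Nat.sInf_le hσ
    obtain ⟨a, b, l, haA, hbB, hmem, hlen, hprod, hσ₀⟩ := hσ₀SRep
    set x : ℕ → G := fun i => l.getD i 1 with hx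
    have hximem : ∀ i, i < k₀ → x i ∈ (A' : Set G) ∪ (B' : Set G) := by
      intro i hik
      have hi : i < l.length := by omega
      simp only [hx, List.getD_eq_getElem _ _ hi]
      exact hmem _ (List.getElem_mem hi)
    have hxi_eq : ∀ i, i < k₀ → l.take (i + 1) = l.take i ++ [x i] := by
      intro i hik
      have hi : i < l.length := by omega
      rw [List.take_succ, List.getElem?_eq_getElem hi]
      simp only [hx, List.getD_eq_getElem _ _ hi]
      rfl
    -- merging two consecutive picks in the same subgroup is impossible
    have noPair : ∀ i, i + 1 < k₀ →
        ¬((x i ∈ A' ∧ x (i + 1) ∈ A') ∨ (x i ∈ B' ∧ x (i + 1) ∈ B')) := by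
      intro i hi hcase
      have hi1 : i + 1 < l.length := by omega
      have hi0 : i < l.length := by omega
      have hdrop : l.drop (i + 1) = x (i + 1) :: l.drop (i + 2) := by
        rw [List.drop_eq_getElem_cons hi1]
        simp only [hx, List.getD_eq_getElem _ _ hi1]
      have hsplit : l = l.take i ++ x i :: x (i + 1) :: l.drop (i + 2) := by
        conv_lhs => rw [list_split1 l i hi0]
        rw [hdrop]
      have hRepMerge : Rep (k₀ - 1) := by
        refine ⟨a, b, l.take i ++ (x i * x (i + 1)) :: l.drop (i + 2), haA, hbB, ?_, ?_, ?_⟩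
        · intro t ht
          rcases List.mem_append.1 ht with h' | h'
          · exact hmem t (List.mem_of_mem_take h')
          · rcases List.mem_cons.1 h' with rfl | h''
            · rcases hcase with ⟨h1, h2⟩ | ⟨h1, h2⟩
              · exact Set.mem_union_left _ (A'.mul_mem h1 h2)
              · exact Set.mem_union_right _ (B'.mul_mem h1 h2)
            · exact hmem t (List.mem_of_mem_drop h'')
        · simp only [List.length_append, List.length_cons, List.length_take, List.length_drop]
          omega
        · have hpe : (l.take i ++ (x i * x (i + 1)) :: l.drop (i + 2)).prod = l.prod := by
            conv_rhs => rw [hsplit]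
            simp [List.prod_append, List.prod_cons, mul_assoc]
          rw [hpe, hprod]
      have := hk₀min _ hRepMerge
      omega
    have hl_ne : l ≠ [] := by
      intro h
      rw [h] at hlen
      simp at hlen
      omega
    have hsplit0 : l = x 0 :: l.drop 1 := by
      have h := list_split1 l 0 (by omega)
      simpa [hx] using h
    have hlp0 : l.prod = x 0 * (l.drop 1).prod := by
      conv_lhs => rw [hsplit0]
      rw [List.prod_cons]
    have headNotA : x 0 ∉ A' := by
      intro hxA
      have hRepHead : Rep (k₀ - 1) := by
        refine ⟨a * x 0, b, l.drop 1, A.mul_mem haA (hA'A hxA), hbB,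
          fun t ht => hmem t (List.mem_of_mem_drop ht), ?_, ?_⟩
        · simp only [List.length_drop]; omega
        · rw [← hprod, hlp0]; group
      have := hk₀min _ hRepHead
      omega
    have headB : x 0 ∈ B' := by
      rcases hximem 0 (by omega) with h | h
      · exact absurd h headNotA
      · exact h
    have hsplitLast : l = l.take (k₀ - 1) ++ [x (k₀ - 1)] := by
      have h1 := list_split1 l (k₀ - 1) (by omega)
      have h2 : l.drop ((k₀ - 1) + 1) = [] := by
        apply List.drop_eq_nil_of_le
        omega
      rw [h2] at h1
      simpa [hx] using h1
    have hlpLast : l.prod = (l.take (k₀ - 1)).prod * x (k₀ - 1) := by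
      conv_lhs => rw [hsplitLast]
      rw [List.prod_append, List.prod_singleton]
    have lastNotB : x (k₀ - 1) ∉ B' := by
      intro hxB
      have hRepLast : Rep (k₀ - 1) := by
        refine ⟨a, x (k₀ - 1) * b, l.take (k₀ - 1), haA, B.mul_mem (hB'B hxB) hbB,
          fun t ht => hmem t (List.mem_of_mem_take ht), ?_, ?_⟩
        · simp only [List.length_take]; omega
        · rw [← hprod, hlpLast]; group
      have := hk₀min _ hRepLast
      omega
    have lastA : x (k₀ - 1) ∈ A' := by
      rcases hximem (k₀ - 1) (by omega) with h | h
      · exact h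
      · exact absurd h lastNotB
    have hk₀2 : 2 ≤ k₀ := by
      by_contra hcon
      have hk1 : k₀ - 1 = 0 := by omega
      rw [hk1] at lastNotB
      exact lastNotB headB
    have noInterX : ∀ i, i < k₀ → x i ∉ (A ⊓ B : Subgroup G) := by
      intro i hik hxAB
      rw [hinter] at hxAB
      have hxA' : x i ∈ A' := (Subgroup.mem_inf.1 hxAB).1
      have hxB' : x i ∈ B' := (Subgroup.mem_inf.1 hxAB).2
      rcases Nat.lt_or_ge (i + 1) k₀ with hlt | hge
      · rcases hximem (i + 1) hlt with h | h
        · exact noPair i hlt (Or.inl ⟨hxA', h⟩)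
        · exact noPair i hlt (Or.inr ⟨hxB', h⟩)
      · have hipos : 1 ≤ i := by
          rcases Nat.eq_zero_or_pos i with rfl | h
          · exact absurd hxA' headNotA
          · exact h
        obtain ⟨i', rfl⟩ : ∃ i', i = i' + 1 := ⟨i - 1, by omega⟩
        rcases hximem i' (by omega) with h | h
        · exact noPair i' (by omega) (Or.inl ⟨h, hxA'⟩)
        · exact noPair i' (by omega) (Or.inr ⟨h, hxB'⟩)
    have bigX : ∀ i, i < k₀ → L < (wordLength S (x i) : ℝ) := by
      intro i hik
      by_contra hle
      push_neg at hle
      exact noInterX i hik (hball ⟨hle, hximem i hik⟩)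
    -- corner bound at the start
    have corner1 : gromovProd S a⁻¹ (x 0) 1 ≤ C := by
      by_contra hcon
      push_neg at hcon
      have hCle : Cab ≤ gromovProd S a⁻¹ (x 0) 1 :=
        le_trans (le_max_left _ _) (le_of_lt hcon)
      obtain ⟨γ, hγAB, hγineq⟩ := hCab a⁻¹ (x 0) (A.inv_mem haA) (hB'B headB) hCle
      have hγA'B' : γ ∈ A' ⊓ B' := hinter ▸ hγAB
      have hγA : γ ∈ A := (Subgroup.mem_inf.1 hγAB).1
      have hγA' : γ ∈ A' := (Subgroup.mem_inf.1 hγA'B').1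
      have hγB' : γ ∈ B' := (Subgroup.mem_inf.1 hγA'B').2
      have hSRepNew : SRep (wordLength S (a * γ) +
          (((γ⁻¹ * x 0) :: l.drop 1).map (wordLength S)).sum + wordLength S b) := by
        refine ⟨a * γ, b, (γ⁻¹ * x 0) :: l.drop 1, A.mul_mem haA hγA, hbB, ?_, ?_, ?_, rfl⟩
        · intro t ht
          rcases List.mem_cons.1 ht with rfl | hmem2
          · exact Set.mem_union_right _ (B'.mul_mem (B'.inv_mem hγB') headB)
          · exact hmem t (List.mem_of_mem_drop hmem2)
        · simp only [List.length_cons, List.length_drop]; omega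
        · rw [← hprod, hlp0, List.prod_cons]; group
      have hlow := hσ₀min _ hSRepNew
      simp only [List.map_cons, List.sum_cons] at hlow
      have hlowR : (σ₀ : ℝ) ≤ (wordLength S (a * γ) : ℝ) + ((wordLength S (γ⁻¹ * x 0) : ℝ)
          + (((l.drop 1).map (wordLength S)).sum : ℝ)) + (wordLength S b : ℝ) := by
        exact_mod_cast hlow
      have hσsum : (l.map (wordLength S)).sum
          = wordLength S (x 0) + ((l.drop 1).map (wordLength S)).sum := by
        conv_lhs => rw [hsplit0]
        simp
      have hσ₀R : (σ₀ : ℝ) = (wordLength S a : ℝ) + ((wordLength S (x 0) : ℝ)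
          + (((l.drop 1).map (wordLength S)).sum : ℝ)) + (wordLength S b : ℝ) := by
        rw [hσ₀, hσsum]; push_cast; ring
      have e1 : wordLength S (a * γ) = wordDist S a⁻¹ γ := by
        unfold wordDist; rw [inv_inv]
      have e2 : wordLength S (γ⁻¹ * x 0) = wordDist S γ (x 0) := rfl
      have e3 : (wordLength S a⁻¹ : ℝ) = (wordLength S a : ℝ) := by
        rw [wordLength_inv hS]
      rw [e1, e2] at hlowR
      rw [e3] at hγineq
      linarith
    -- internal corner bounds
    have cornerInt : ∀ i, i + 1 < k₀ → gromovProd S (x i)⁻¹ (x (i + 1)) 1 ≤ C := by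
      intro i hik
      by_contra hcon
      push_neg at hcon
      have hi1 : i + 1 < l.length := by omega
      have hi0 : i < l.length := by omega
      have hdrop : l.drop (i + 1) = x (i + 1) :: l.drop (i + 2) := by
        rw [List.drop_eq_getElem_cons hi1]
        simp only [hx, List.getD_eq_getElem _ _ hi1]
      have hsplit : l = l.take i ++ x i :: x (i + 1) :: l.drop (i + 2) := by
        conv_lhs => rw [list_split1 l i hi0]
        rw [hdrop]
      have hkey : ∃ γ, γ ∈ A' ⊓ B' ∧
          (wordDist S (x i)⁻¹ γ : ℝ) + (wordDist S γ (x (i + 1)) : ℝ) + 2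
            ≤ (wordLength S (x i)⁻¹ : ℝ) + (wordLength S (x (i + 1)) : ℝ) := by
        rcases hximem i (by omega) with hxiA | hxiB
        · have hxi1B : x (i + 1) ∈ B' := by
            rcases hximem (i + 1) hik with h | h
            · exact absurd (Or.inl ⟨hxiA, h⟩) (noPair i hik)
            · exact h
          have hCle : Cab ≤ gromovProd S (x i)⁻¹ (x (i + 1)) 1 :=
            le_trans (le_max_left _ _) (le_of_lt hcon)
          obtain ⟨γ, hγAB, hγineq⟩ := hCab (x i)⁻¹ (x (i + 1))
            (A.inv_mem (hA'A hxiA)) (hB'B hxi1B) hCle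
          exact ⟨γ, hinter ▸ hγAB, hγineq⟩
        · have hxi1A : x (i + 1) ∈ A' := by
            rcases hximem (i + 1) hik with h | h
            · exact h
            · exact absurd (Or.inr ⟨hxiB, h⟩) (noPair i hik)
          have hCle : Cba ≤ gromovProd S (x i)⁻¹ (x (i + 1)) 1 :=
            le_trans (le_max_right _ _) (le_of_lt hcon)
          obtain ⟨γ, hγBA, hγineq⟩ := hCba (x i)⁻¹ (x (i + 1))
            (B.inv_mem (hB'B hxiB)) (hA'A hxi1A) hCle
          refine ⟨γ, ?_, hγineq⟩
          have hmem3 := Subgroup.mem_inf.1 hγBA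
          rw [← hinter]
          exact Subgroup.mem_inf.2 ⟨hmem3.2, hmem3.1⟩
      obtain ⟨γ, hγA'B', hγineq⟩ := hkey
      have hγA' : γ ∈ A' := (Subgroup.mem_inf.1 hγA'B').1
      have hγB' : γ ∈ B' := (Subgroup.mem_inf.1 hγA'B').2
      have hSRepNew : SRep (wordLength S a +
          ((l.take i ++ (x i * γ) :: (γ⁻¹ * x (i + 1)) :: l.drop (i + 2)).map
            (wordLength S)).sum + wordLength S b) := by
        refine ⟨a, b, l.take i ++ (x i * γ) :: (γ⁻¹ * x (i + 1)) :: l.drop (i + 2),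
          haA, hbB, ?_, ?_, ?_, rfl⟩
        · intro t ht
          rcases List.mem_append.1 ht with hc1 | hc1
          · exact hmem t (List.mem_of_mem_take hc1)
          · rcases List.mem_cons.1 hc1 with rfl | hc2
            · rcases hximem i (by omega) with h | h
              · exact Set.mem_union_left _ (A'.mul_mem h hγA')
              · exact Set.mem_union_right _ (B'.mul_mem h hγB')
            · rcases List.mem_cons.1 hc2 with rfl | hc3
              · rcases hximem (i + 1) hik with h | h
                · exact Set.mem_union_left _ (A'.mul_mem (A'.inv_mem hγA') h)
                · exact Set.mem_union_right _ (B'.mul_mem (B'.inv_mem hγB') h)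
              · exact hmem t (List.mem_of_mem_drop hc3)
        · simp only [List.length_append, List.length_cons, List.length_take, List.length_drop]
          omega
        · have hpe : (l.take i ++ (x i * γ) :: (γ⁻¹ * x (i + 1)) :: l.drop (i + 2)).prod
              = l.prod := by
            conv_rhs => rw [hsplit]
            simp only [List.prod_append, List.prod_cons]
            group
          rw [hpe, hprod]
      have hlow := hσ₀min _ hSRepNew
      simp only [List.map_append, List.map_cons, List.sum_append, List.sum_cons] at hlow
      have hσsum : (l.map (wordLength S)).sum = ((l.take i).map (wordLength S)).sum
          + (wordLength S (x i) + (wordLength S (x (i + 1))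
          + ((l.drop (i + 2)).map (wordLength S)).sum)) := by
        conv_lhs => rw [hsplit]
        simp
      have hlowR : (σ₀ : ℝ) ≤ (wordLength S a : ℝ) + ((((l.take i).map (wordLength S)).sum : ℝ)
          + ((wordLength S (x i * γ) : ℝ) + ((wordLength S (γ⁻¹ * x (i + 1)) : ℝ)
          + (((l.drop (i + 2)).map (wordLength S)).sum : ℝ)))) + (wordLength S b : ℝ) := by
        exact_mod_cast hlow
      have hσ₀R : (σ₀ : ℝ) = (wordLength S a : ℝ) + ((((l.take i).map (wordLength S)).sum : ℝ)
          + ((wordLength S (x i) : ℝ) + ((wordLength S (x (i + 1)) : ℝ)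
          + (((l.drop (i + 2)).map (wordLength S)).sum : ℝ)))) + (wordLength S b : ℝ) := by
        rw [hσ₀, hσsum]; push_cast; ring
      have e1 : wordLength S (x i * γ) = wordDist S (x i)⁻¹ γ := by
        unfold wordDist; rw [inv_inv]
      have e2 : wordLength S (γ⁻¹ * x (i + 1)) = wordDist S γ (x (i + 1)) := rfl
      have e3 : (wordLength S (x i)⁻¹ : ℝ) = (wordLength S (x i) : ℝ) := by
        rw [wordLength_inv hS]
      rw [e1, e2] at hlowR
      rw [e3] at hγineq
      linarith
    -- corner bound at the end
    have cornerLast : gromovProd S (x (k₀ - 1))⁻¹ b 1 ≤ C := by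
      by_contra hcon
      push_neg at hcon
      have hCle : Cab ≤ gromovProd S (x (k₀ - 1))⁻¹ b 1 :=
        le_trans (le_max_left _ _) (le_of_lt hcon)
      obtain ⟨γ, hγAB, hγineq⟩ := hCab (x (k₀ - 1))⁻¹ b (A.inv_mem (hA'A lastA)) hbB hCle
      have hγA'B' : γ ∈ A' ⊓ B' := hinter ▸ hγAB
      have hγB : γ ∈ B := (Subgroup.mem_inf.1 hγAB).2
      have hγA' : γ ∈ A' := (Subgroup.mem_inf.1 hγA'B').1
      have hSRepNew : SRep (wordLength S a +
          ((l.take (k₀ - 1) ++ [x (k₀ - 1) * γ]).map (wordLength S)).sum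
          + wordLength S (γ⁻¹ * b)) := by
        refine ⟨a, γ⁻¹ * b, l.take (k₀ - 1) ++ [x (k₀ - 1) * γ], haA,
          B.mul_mem (B.inv_mem hγB) hbB, ?_, ?_, ?_, rfl⟩
        · intro t ht
          rcases List.mem_append.1 ht with hc1 | hc1
          · exact hmem t (List.mem_of_mem_take hc1)
          · rcases List.mem_cons.1 hc1 with rfl | hc2
            · exact Set.mem_union_left _ (A'.mul_mem lastA hγA')
            · simp at hc2
        · simp only [List.length_append, List.length_cons, List.length_take,
            List.length_nil]
          omega
        · rw [← hprod, hlpLast]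
          rw [List.prod_append, List.prod_singleton]
          group
      have hlow := hσ₀min _ hSRepNew
      simp only [List.map_append, List.map_cons, List.map_nil, List.sum_append,
        List.sum_cons, List.sum_nil] at hlow
      have hσsum : (l.map (wordLength S)).sum = ((l.take (k₀ - 1)).map (wordLength S)).sum
          + wordLength S (x (k₀ - 1)) := by
        conv_lhs => rw [hsplitLast]
        simp
      have hlowR : (σ₀ : ℝ) ≤ (wordLength S a : ℝ)
          + ((((l.take (k₀ - 1)).map (wordLength S)).sum : ℝ)
          + ((wordLength S (x (k₀ - 1) * γ) : ℝ) + 0))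
          + (wordLength S (γ⁻¹ * b) : ℝ) := by
        exact_mod_cast hlow
      have hσ₀R : (σ₀ : ℝ) = (wordLength S a : ℝ)
          + ((((l.take (k₀ - 1)).map (wordLength S)).sum : ℝ)
          + (wordLength S (x (k₀ - 1)) : ℝ)) + (wordLength S b : ℝ) := by
        rw [hσ₀, hσsum]; push_cast; ring
      have e1 : wordLength S (x (k₀ - 1) * γ) = wordDist S (x (k₀ - 1))⁻¹ γ := by
        unfold wordDist; rw [inv_inv]
      have e2 : wordLength S (γ⁻¹ * b) = wordDist S γ b := rfl
      have e3 : (wordLength S (x (k₀ - 1))⁻¹ : ℝ) = (wordLength S (x (k₀ - 1)) : ℝ) := by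
        rw [wordLength_inv hS]
      rw [e1, e2] at hlowR
      rw [e3] at hγineq
      linarith
    -- the broken line w 0 = 1, w 1 = a, ..., w (k₀+1) = a l.prod, w (k₀+2) = g
    set w : ℕ → G := fun j => if j = 0 then 1 else if j ≤ k₀ + 1 then
      a * (l.take (j - 1)).prod else g with hw
    have hw0 : w 0 = 1 := by simp [hw]
    have hwj : ∀ j, 1 ≤ j → j ≤ k₀ + 1 → w j = a * (l.take (j - 1)).prod := by
      intro j h1 h2
      simp only [hw]
      rw [if_neg (by omega), if_pos h2]
    have hw1 : w 1 = a := by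
      rw [hwj 1 le_rfl (by omega)]
      simp
    have hwtop : w (k₀ + 2) = g := by
      simp only [hw]
      rw [if_neg (by omega), if_neg (by omega)]
    have hwstep : ∀ j, 1 ≤ j → j ≤ k₀ → w (j + 1) = w j * x (j - 1) := by
      intro j h1 h2
      rw [hwj j h1 (by omega), hwj (j + 1) (by omega) (by omega)]
      have he : (j + 1) - 1 = (j - 1) + 1 := by omega
      rw [he, hxi_eq (j - 1) (by omega)]
      rw [List.prod_append, List.prod_singleton, mul_assoc]
    have hwk1 : w (k₀ + 1) = a * l.prod := by
      rw [hwj (k₀ + 1) (by omega) le_rfl]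
      simp only [Nat.add_sub_cancel]
      rw [← hlen, List.take_length]
    have hglast : w (k₀ + 2) = w (k₀ + 1) * b := by
      rw [hwtop, hwk1, ← hprod]
    have hside : ∀ j, 1 ≤ j → j ≤ k₀ →
        wordDist S (w j) (w (j + 1)) = wordLength S (x (j - 1)) := by
      intro j h1 h2
      rw [hwstep j h1 h2]
      unfold wordDist
      congr 1
      group
    have hcorner : ∀ j, 1 ≤ j → j + 1 ≤ k₀ + 2 →
        gromovProd S (w (j - 1)) (w (j + 1)) (w j) ≤ C := by
      intro j h1 h2
      rw [gromov_base hS (w j) (w (j - 1)) (w (j + 1))]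
      rcases (by omega : j = 1 ∨ (2 ≤ j ∧ j ≤ k₀) ∨ j = k₀ + 1) with rfl | ⟨hj2, hjk⟩ | rfl
      · have e1 : (w 1)⁻¹ * w (1 - 1) = a⁻¹ := by
          rw [show (1 : ℕ) - 1 = 0 from rfl, hw0, hw1]
          group
        have e2 : (w 1)⁻¹ * w (1 + 1) = x 0 := by
          rw [show (1 : ℕ) + 1 = 1 + 1 from rfl, hwstep 1 le_rfl (by omega), hw1]
          group
        rw [e1, e2]
        exact corner1
      · have hstep1 : w j = w (j - 1) * x (j - 2) := by
          have := hwstep (j - 1) (by omega) (by omega)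
          have e : (j - 1) + 1 = j := by omega
          have e' : (j - 1) - 1 = j - 2 := by omega
          rw [e, e'] at this
          exact this
        have hstep2 : w (j + 1) = w j * x (j - 1) := hwstep j (by omega) (by omega)
        have e1 : (w j)⁻¹ * w (j - 1) = (x (j - 2))⁻¹ := by
          rw [hstep1]; group
        have e2 : (w j)⁻¹ * w (j + 1) = x (j - 1) := by
          rw [hstep2]; group
        rw [e1, e2]
        have hci := cornerInt (j - 2) (by omega)
        have e3 : (j - 2) + 1 = j - 1 := by omega
        rw [e3] at hci
        exact hci
      · have hstep1 : w (k₀ + 1) = w k₀ * x (k₀ - 1) := hwstep k₀ (by omega) le_rfl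
        have e1 : (w (k₀ + 1))⁻¹ * w ((k₀ + 1) - 1) = (x (k₀ - 1))⁻¹ := by
          rw [show (k₀ + 1) - 1 = k₀ from by omega, hstep1]
          group
        have e2 : (w (k₀ + 1))⁻¹ * w ((k₀ + 1) + 1) = b := by
          rw [show (k₀ + 1) + 1 = k₀ + 2 from rfl, hglast]
          group
        rw [e1, e2]
        exact cornerLast
    have hsideH : ∀ j, 2 ≤ j → j + 1 ≤ k₀ + 2 →
        L ≤ (wordDist S (w (j - 1)) (w j) : ℝ) := by
      intro j h2 h3
      have hs := hside (j - 1) (by omega) (by omega)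
      have e : (j - 1) + 1 = j := by omega
      have e' : (j - 1) - 1 = j - 2 := by omega
      rw [e, e'] at hs
      rw [hs]
      exact le_of_lt (bigX (j - 2) (by omega))
    have h4pt : ∀ x₁ y₁ z₁ w₁ : G,
        min (gromovProd S x₁ y₁ w₁) (gromovProd S y₁ z₁ w₁) - δ₀ ≤ gromovProd S x₁ z₁ w₁ := by
      intro x₁ y₁ z₁ w₁
      have := four_point hS hδ hhyp x₁ y₁ z₁ w₁
      rw [hδ₀def]
      exact this
    obtain ⟨-, hsum⟩ := broken_line hS δ₀ C hδ₀0 hC0 h4pt L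
      (by rw [hLdef, hC'def]; linarith) (k₀ + 2) w hcorner hsideH (k₀ + 1)
      (by omega) (by omega)
    have hdg : (wordDist S (w 0) (w (k₀ + 1 + 1)) : ℝ) ≤ N := by
      rw [show k₀ + 1 + 1 = k₀ + 2 from rfl, hw0, hwtop, wordDist_one_left]
      exact hgN
    have hsumlow : (k₀ : ℝ) * L ≤
        ∑ t ∈ Finset.range (k₀ + 1 + 1), (wordDist S (w t) (w (t + 1)) : ℝ) := by
      have hterm : ∀ t ∈ Finset.Icc 1 k₀, L ≤ (wordDist S (w t) (w (t + 1)) : ℝ) := by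
        intro t ht
        rw [Finset.mem_Icc] at ht
        rw [hside t ht.1 ht.2]
        exact le_of_lt (bigX (t - 1) (by omega))
      have h1 : (Finset.Icc 1 k₀).card • L ≤
          ∑ t ∈ Finset.Icc 1 k₀, (wordDist S (w t) (w (t + 1)) : ℝ) :=
        Finset.card_nsmul_le_sum _ _ _ hterm
      have hcard : (Finset.Icc 1 k₀).card = k₀ := by
        rw [Nat.card_Icc]
        omega
      rw [hcard] at h1
      have h2 : ∑ t ∈ Finset.Icc 1 k₀, (wordDist S (w t) (w (t + 1)) : ℝ) ≤
          ∑ t ∈ Finset.range (k₀ + 1 + 1), (wordDist S (w t) (w (t + 1)) : ℝ) := by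
        apply Finset.sum_le_sum_of_subset_of_nonneg
        · intro t ht
          rw [Finset.mem_Icc] at ht
          rw [Finset.mem_range]
          omega
        · intro t _ _
          positivity
      calc (k₀ : ℝ) * L = k₀ • L := by rw [nsmul_eq_mul]
        _ ≤ _ := h1
        _ ≤ _ := h2
    have hk2R : (2 : ℝ) ≤ (k₀ : ℝ) := by exact_mod_cast hk₀2
    have hLC : 0 ≤ L - 2 * C' := by rw [hLdef]; linarith
    have hC'0 : 0 ≤ C' := by rw [hC'def]; linarith
    have hcast : (((k₀ + 1 : ℕ)) : ℝ) = (k₀ : ℝ) + 1 := by push_cast; ring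
    rw [hcast] at hsum
    have hkey : 2 * L - 6 * C' ≤ N := by
      nlinarith [mul_nonneg (by linarith : (0 : ℝ) ≤ (k₀ : ℝ) - 2) hLC]
    rw [hLdef] at hkey
    linarith


end Main

/-- **Lemma 3.** Let `G` be `δ`-hyperbolic and `A, B` be `ε`-quasiconvex subgroups.
For any `N ≥ 0` there is `N₁ = N₁(N,δ,ε,G,S) ≥ 0` such that: if subgroups `A' ≤ A` and
`B' ≤ B` satisfy `A ∩ B = A' ∩ B'` and `𝒪_{N₁}(1) ∩ (A' ∪ B') ⊆ A ∩ B`, then the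
subgroup `H = ⟨A', B'⟩` satisfies `𝒪_N(1) ∩ (A H B) ⊆ AB`. -/
theorem ball_inter_AHB_subset_AB
    {G : Type*} [Group G] (S : Set G) (hS : IsSymmGenSet S)
    (δ : ℝ) (hδ : 0 ≤ δ) (hhyp : ThinTriangles S δ)
    (ε : ℝ) (hε : 0 ≤ ε) (A B : Subgroup G)
    (hA : IsQuasiconvex S ε (A : Set G)) (hB : IsQuasiconvex S ε (B : Set G)) :
    ∀ N : ℝ, 0 ≤ N → ∃ N₁ : ℝ, 0 ≤ N₁ ∧
      ∀ A' B' : Subgroup G, A' ≤ A → B' ≤ B → A ⊓ B = A' ⊓ B' →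
        ({g : G | (wordLength S g : ℝ) ≤ N₁} ∩ ((A' : Set G) ∪ (B' : Set G))
            ⊆ ((A ⊓ B : Subgroup G) : Set G)) →
        ({g : G | (wordLength S g : ℝ) ≤ N} ∩
            ((A : Set G) * ((A' ⊔ B' : Subgroup G) : Set G) * (B : Set G))
          ⊆ (A : Set G) * (B : Set G)) :=
  main_theorem hS δ hδ hhyp ε hε A B hA hB
end

section
/- Let G be a finitely generated group equipped with the word metric with respect to a finite symmetrized generating set 𝒜, and let A, B ≤ G be subgroups such that A, B and A ∩ B are separable in G. Then for every N ≥ 0 there exist subgroups A' ≤ A and B' ≤ B of finite index in A and B respectively such that A ∩ B ⊆ A', A ∩ B ⊆ B', and 𝒪_N(1_G) ∩ (A' ∪ B') ⊆ A ∩ B; in particular A' ∩ B' = A ∩ B. -/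
open scoped Pointwise

-- key separation lemma
lemma sep_key {G : Type*} [Group G] {P : Set G} (hP : SeparableSubset G P) {g : G}
    (hg : g ∉ P) : ∃ K : Subgroup G, K.Normal ∧ K.FiniteIndex ∧
      ∀ k ∈ K, g * k ∉ P := by
  have hopen : TopologicalSpace.GenerateOpen
      {U : Set G | ∃ (h : G) (N : Subgroup G), N.Normal ∧ N.FiniteIndex ∧ U = h • (N : Set G)}
      Pᶜ := hP.isOpen_compl
  have main : ∀ U : Set G, TopologicalSpace.GenerateOpen
      {U : Set G | ∃ (h : G) (N : Subgroup G), N.Normal ∧ N.FiniteIndex ∧ U = h • (N : Set G)} U →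
      ∀ x ∈ U, ∃ K : Subgroup G, K.Normal ∧ K.FiniteIndex ∧ x • (K : Set G) ⊆ U := by
    intro U hU
    induction hU with
    | basic V hV =>
      rcases hV with ⟨h, N, hN1, hN2, rfl⟩
      intro x hx
      refine ⟨N, hN1, hN2, ?_⟩
      rcases hx with ⟨n, hn, rfl⟩
      rintro y ⟨m, hm, rfl⟩
      exact ⟨n * m, mul_mem hn hm, by simp [smul_eq_mul, mul_assoc]⟩
    | univ => exact fun x _ => ⟨⊤, inferInstance, Subgroup.instFiniteIndexTop, by simp⟩
    | inter V W _ _ ihV ihW =>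
      intro x hx
      obtain ⟨K1, hn1, hf1, hs1⟩ := ihV x hx.1
      obtain ⟨K2, hn2, hf2, hs2⟩ := ihW x hx.2
      haveI := hf1; haveI := hf2
      refine ⟨K1 ⊓ K2, ⟨fun x hx g => ⟨hn1.conj_mem x hx.1 g, hn2.conj_mem x hx.2 g⟩⟩,
        inferInstance, fun y hy => ?_⟩
      rcases hy with ⟨k, hk, rfl⟩
      exact ⟨hs1 ⟨k, hk.1, rfl⟩, hs2 ⟨k, hk.2, rfl⟩⟩
    | sUnion 𝒮 _ ih =>
      rintro x ⟨V, hV, hx⟩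
      obtain ⟨K, h1, h2, h3⟩ := ih V hV x hx
      exact ⟨K, h1, h2, h3.trans (Set.subset_sUnion_of_mem hV)⟩
  obtain ⟨K, h1, h2, h3⟩ := main Pᶜ hopen g hg
  exact ⟨K, h1, h2, fun k hk => h3 ⟨k, hk, rfl⟩⟩

-- finiteness of the ball
lemma ball_finite_s13 {G : Type*} [Group G] {S : Set G} (hS : IsSymmGenSet S) (N : ℝ) :
    {g : G | (wordLength S g : ℝ) ≤ N}.Finite := by
  obtain ⟨hfin, hsymm, hgen⟩ := hS
  have hsub : {g : G | (wordLength S g : ℝ) ≤ N} ⊆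
      ⋃ n ∈ Finset.range (⌊N⌋₊ + 1),
        (fun f : Fin n → G => (List.ofFn f).prod) '' (Set.univ.pi fun _ => S) := by
    intro g hg
    have hne : {n : ℕ | ∃ f : Fin n → G, (∀ i, f i ∈ S) ∧ (List.ofFn f).prod = g}.Nonempty := by
      have hg' : g ∈ Subgroup.closure S := hgen ▸ Subgroup.mem_top g
      have : g ∈ Submonoid.closure S := by
        have h2 : (Subgroup.closure S).toSubmonoid = Submonoid.closure (S ∪ S⁻¹) :=
          Subgroup.closure_toSubmonoid S
        have : g ∈ Submonoid.closure (S ∪ S⁻¹) := h2 ▸ hg'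
        rwa [hsymm, Set.union_self] at this
      obtain ⟨l, hl1, hl2⟩ := Submonoid.exists_list_of_mem_closure this
      exact ⟨l.length, l.get, fun i => hl1 _ (l.get_mem i ..), by rw [List.ofFn_get]; exact hl2⟩
    obtain ⟨f, hf1, hf2⟩ := Nat.sInf_mem hne
    have hle : wordLength S g ≤ ⌊N⌋₊ := Nat.le_floor hg
    refine Set.mem_iUnion₂.2 ⟨wordLength S g, Finset.mem_range.2 (Nat.lt_succ_of_le hle), ?_⟩
    exact ⟨f, fun i _ => hf1 i, hf2⟩
  refine Set.Finite.subset ?_ hsub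
  refine Set.Finite.biUnion (Finset.range (⌊N⌋₊ + 1)).finite_toSet fun n _ => ?_
  exact (Set.Finite.pi fun _ => hfin).image _


/-- If `A`, `B` and `A ⊓ B` are separable subgroups of a finitely generated group `G`,
then for every `N ≥ 0` there are finite index subgroups `A' ≤ A` and `B' ≤ B` with
`A ⊓ B ≤ A'`, `A ⊓ B ≤ B'` and `𝒪_N(1) ∩ (A' ∪ B') ⊆ A ⊓ B`; in particular
`A' ⊓ B' = A ⊓ B`. -/
theorem exists_finiteIndex_subgroups_ball_inter
    {G : Type*} [Group G] (S : Set G) (hS : IsSymmGenSet S) (A B : Subgroup G)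
    (hA : SeparableSubset G (A : Set G)) (hB : SeparableSubset G (B : Set G))
    (hAB : SeparableSubset G ((A ⊓ B : Subgroup G) : Set G)) :
    ∀ N : ℝ, 0 ≤ N → ∃ A' B' : Subgroup G,
      A' ≤ A ∧ B' ≤ B ∧ A'.relIndex A ≠ 0 ∧ B'.relIndex B ≠ 0 ∧
      A ⊓ B ≤ A' ∧ A ⊓ B ≤ B' ∧
      ({g : G | (wordLength S g : ℝ) ≤ N} ∩ ((A' : Set G) ∪ (B' : Set G))
        ⊆ ((A ⊓ B : Subgroup G) : Set G)) ∧
      A' ⊓ B' = A ⊓ B := by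
  intro N hN
  set D : Set G := {g : G | (wordLength S g : ℝ) ≤ N} \ ((A ⊓ B : Subgroup G) : Set G) with hDdef
  have hD : D.Finite := (ball_finite_s13 hS N).diff
  have hchoice : ∀ g : G, ∃ K : Subgroup G, K.Normal ∧ K.FiniteIndex ∧
      (g ∈ D → ∀ k ∈ K, g * k ∉ ((A ⊓ B : Subgroup G) : Set G)) := by
    intro g
    by_cases hg : g ∈ D
    · obtain ⟨K, a, b, c⟩ := sep_key hAB hg.2
      exact ⟨K, a, b, fun _ => c⟩
    · exact ⟨⊤, inferInstance, Subgroup.instFiniteIndexTop, fun h => absurd h hg⟩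
  choose κ h1 h2 h3 using hchoice
  set K : Subgroup G := ⨅ g ∈ hD.toFinset, κ g with hKdef
  have hKfi : K.FiniteIndex := Subgroup.finiteIndex_iInf' κ fun i _ => h2 i
  have hKle : ∀ g ∈ hD.toFinset, K ≤ κ g := fun g hg => biInf_le κ hg
  have hKn : K.Normal := by
    constructor
    intro n hn x
    simp only [hKdef, Subgroup.mem_iInf] at hn ⊢
    exact fun g hg => (h1 g).conj_mem n (hn g hg) x
  set L : Subgroup G := (A ⊓ B) ⊔ K with hLdef
  have key : ∀ g : G, (wordLength S g : ℝ) ≤ N → g ∈ L →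
      g ∈ ((A ⊓ B : Subgroup G) : Set G) := by
    intro g hgball hgL
    by_contra hg
    have hgD : g ∈ D := ⟨hgball, hg⟩
    have : (g : G) ∈ ((A ⊓ B : Subgroup G) : Set G) * (K : Set G) := by
      rw [← Subgroup.mul_normal]; exact hgL
    obtain ⟨c, hc, k, hk, rfl⟩ := this
    have hk' : k⁻¹ ∈ κ (c * k) := hKle _ (hD.mem_toFinset.2 hgD) (inv_mem hk)
    have := h3 (c * k) hgD k⁻¹ hk'
    simp only [mul_assoc, mul_inv_cancel, mul_one] at this
    exact this hc
  refine ⟨A ⊓ L, B ⊓ L, inf_le_left, inf_le_left, ?_, ?_, ?_, ?_, ?_, ?_⟩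
  · have h4 : K ⊓ A ≤ A ⊓ L := le_inf inf_le_right (inf_le_left.trans le_sup_right)
    have d1 : (A ⊓ L).relIndex A ∣ (K ⊓ A).relIndex A :=
      Subgroup.relIndex_dvd_of_le_left A h4
    rw [Subgroup.inf_relIndex_right] at d1
    have d2 : K.relIndex A ∣ K.index := haveI := hKn; Subgroup.relIndex_dvd_index_of_normal (H := K) _
    intro h0
    rw [h0] at d1
    exact hKfi.index_ne_zero (zero_dvd_iff.mp (dvd_trans d1 d2))
  · have h4 : K ⊓ B ≤ B ⊓ L := le_inf inf_le_right (inf_le_left.trans le_sup_right)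
    have d1 : (B ⊓ L).relIndex B ∣ (K ⊓ B).relIndex B :=
      Subgroup.relIndex_dvd_of_le_left B h4
    rw [Subgroup.inf_relIndex_right] at d1
    have d2 : K.relIndex B ∣ K.index := haveI := hKn; Subgroup.relIndex_dvd_index_of_normal (H := K) _
    intro h0
    rw [h0] at d1
    exact hKfi.index_ne_zero (zero_dvd_iff.mp (dvd_trans d1 d2))
  · exact le_inf inf_le_left le_sup_left
  · exact le_inf inf_le_right le_sup_left
  · rintro g ⟨hgball, hgu⟩
    rcases hgu with hg | hg
    · exact key g hgball ((Subgroup.mem_inf.mp hg).2)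
    · exact key g hgball ((Subgroup.mem_inf.mp hg).2)
  · refine le_antisymm ?_ (le_inf (le_inf inf_le_left le_sup_left) (le_inf inf_le_right le_sup_left))
    intro x hx
    exact ⟨hx.1.1, hx.2.1⟩
end
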